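/- arXiv:2005.05291 — 6 statements merged into one kernel-verified Lean document; each statement's English description precedes it below -/
import Mathlib

section
/- Let k ≥ 2 and let 1 ≤ j ≤ k−1 be an integer. Let H be the k-graph on a vertex set V of size n ≥ k+1 that has a subset X ⊆ V with (j−1)·n < k·|X| < (j+1)·n, and whose edges are exactly the k-element subsets S of V with |S ∩ X| ≠ j. Then H contains no tight Hamilton cycle. (This is the property of the Han–Zhao construction underlying the lower bounds on the tight Hamilton cycle thresholds, e.g. hc_{k−2}(k) ≥ 5/9.) -/
open Finset

variable {A : Type*} [DecidableEq A]

/-- The set of vertices occupying positions `i, …, i+k-1` of the walk `w`. -/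
def walkEdgeAt (k : ℕ) (w : List A) (i : ℕ) : Finset A :=
  ((w.drop i).take k).toFinset

/-- `w` is a tight walk in the `k`-graph with edge set `E`: it has at least `k`
vertices and every `k` consecutive vertices form an edge of `E`. -/
def IsTightWalk (k : ℕ) (E : Finset (Finset A)) (w : List A) : Prop :=
  k ≤ w.length ∧ ∀ i, i + k ≤ w.length → walkEdgeAt k w i ∈ E

/-- The edge `e` appears on the walk `w` (as `k` consecutive vertices). -/
def EdgeOnWalk (k : ℕ) (w : List A) (e : Finset A) : Prop :=
  ∃ i, i + k ≤ w.length ∧ walkEdgeAt k w i = e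

/-- A `k`-uniform edge set is tightly connected if any two of its edges lie on a
common tight walk all of whose edges belong to it. -/
def TightlyConnected (k : ℕ) (E : Finset (Finset A)) : Prop :=
  ∀ e₁ ∈ E, ∀ e₂ ∈ E, ∃ w : List A, IsTightWalk k E w ∧ EdgeOnWalk k w e₁ ∧ EdgeOnWalk k w e₂

/-- `w` is a closed tight walk: every cyclic interval of `k` consecutive vertices
forms an edge of `E`.  Its length is `w.length`. -/
def IsClosedTightWalk (k : ℕ) (E : Finset (Finset A)) (w : List A) : Prop :=
  k ≤ w.length ∧ ∀ i < w.length, ((w.rotate i).take k).toFinset ∈ E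

/-- A tight Hamilton cycle: a cyclic ordering of all the vertices in which every `k`
cyclically consecutive vertices form an edge. -/
def HasTightHamCycle (k : ℕ) (V : Finset A) (E : Finset (Finset A)) : Prop :=
  ∃ w : List A, w.Nodup ∧ w.toFinset = V ∧ IsClosedTightWalk k E w

/-- The `j`-th shadow: all `j`-element sets contained in some edge. -/
def shadow (j : ℕ) (E : Finset (Finset A)) : Finset (Finset A) :=
  E.biUnion fun e => e.powersetCard j

/-- The link graph of `S`: the `(k-d)`-graph whose edges are `e \ S` for edges `e ⊇ S`. -/
def link (S : Finset A) (E : Finset (Finset A)) : Finset (Finset A) :=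
  (E.filter fun e => S ⊆ e).image fun e => e \ S

/-- `E` has a fractional matching of size at least `m`. -/
def HasFracMatching (E : Finset (Finset A)) (m : ℝ) : Prop :=
  ∃ w : Finset A → ℝ,
    (∀ e ∈ E, 0 ≤ w e ∧ w e ≤ 1) ∧
    (∀ v : A, ∑ e ∈ E.filter (fun e' => v ∈ e'), w e ≤ 1) ∧
    m ≤ ∑ e ∈ E, w e

/-- `E` has a `b`-fractional matching of size at least `m` (vertex constraints on `V`). -/
def HasBFracMatching (V : Finset A) (E : Finset (Finset A)) (b : A → ℝ) (m : ℝ) : Prop :=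
  ∃ w : Finset A → ℝ,
    (∀ e ∈ E, 0 ≤ w e ∧ w e ≤ 1) ∧
    (∀ v ∈ V, ∑ e ∈ E.filter (fun e' => v ∈ e'), w e ≤ b v) ∧
    m ≤ ∑ e ∈ E, w e

/-- `γ`-robustly matchable: every vertex weighting with values in `[1-γ,1]` is realised
exactly by an edge weighting with values in `[0,1]`. -/
def RobustlyMatchable (γ : ℝ) (V : Finset A) (E : Finset (Finset A)) : Prop :=
  ∀ b : A → ℝ, (∀ v ∈ V, 1 - γ ≤ b v ∧ b v ≤ 1) →
    ∃ w : Finset A → ℝ, (∀ e ∈ E, 0 ≤ w e ∧ w e ≤ 1) ∧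
      ∀ v ∈ V, ∑ e ∈ E.filter (fun e' => v ∈ e'), w e = b v

/-- A switcher: an edge `e` with a central vertex `a` such that for every `b ∈ e`
there is `c ∉ e` with `(e ∪ {c}) \ {a}` and `(e ∪ {c}) \ {b}` both edges. -/
def HasSwitcher (C : Finset (Finset A)) : Prop :=
  ∃ e ∈ C, ∃ a ∈ e, ∀ b ∈ e, ∃ c, c ∉ e ∧
    insert c (e.erase a) ∈ C ∧ insert c (e.erase b) ∈ C

/-- An arc for the `d`-vicinity `C` of the `k`-graph with edge set `E`: a tuple of
`k+1` distinct vertices `v₁, …, v_{k+1}` with `{v₁,…,v_d} ∈ ∂_d`,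
`{v_{d+1},…,v_k} ∈ C {v₁,…,v_d}`, `{v₂,…,v_{d+1}} ∈ ∂_d` and
`{v_{d+2},…,v_{k+1}} ∈ C {v₂,…,v_{d+1}}`. -/
def HasArc (k d : ℕ) (E : Finset (Finset A)) (C : Finset A → Finset (Finset A)) : Prop :=
  ∃ l : List A, l.length = k + 1 ∧ l.Nodup ∧
    (l.take d).toFinset ∈ shadow d E ∧
    ((l.drop d).take (k - d)).toFinset ∈ C ((l.take d).toFinset) ∧
    ((l.drop 1).take d).toFinset ∈ shadow d E ∧
    (l.drop (d + 1)).toFinset ∈ C (((l.drop 1).take d).toFinset)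

/-- The `k`-graph generated by a `d`-vicinity: all sets `B ∪ S` with `S ∈ ∂_d(E)`
and `B ∈ C S`. -/
def generatedEdges (d : ℕ) (E : Finset (Finset A)) (C : Finset A → Finset (Finset A)) :
    Finset (Finset A) :=
  (shadow d E).biUnion fun S => (C S).image fun B => B ∪ S

/-- `α`-perturbed minimum relative `d`-degree at least `δ` for a `k`-graph on vertex
set `V` with edge set `E`. -/
def PerturbedDegLB (k d : ℕ) (a δ : ℝ) (V : Finset A) (E : Finset (Finset A)) : Prop :=
  ∀ j : ℕ, 1 ≤ j → j ≤ d →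
    (∀ S ∈ shadow j E,
      δ * (((V.card - j).choose (k - j) : ℕ) : ℝ) ≤ ((E.filter fun e => S ⊆ e).card : ℝ)) ∧
    ((((V.powersetCard j).filter fun S => S ∉ shadow j E).card : ℝ)
        ≤ a * ((V.card.choose j : ℕ) : ℝ)) ∧
    (∀ T : Finset A, (T ∈ shadow (j - 1) E ∨ (j = 1 ∧ T = ∅)) →
      ((((V.powersetCard j).filter fun S => T ⊆ S ∧ S ∉ shadow j E).card : ℝ)
        < a * ((V.card : ℝ) - (j : ℝ) + 1)))

/-- A `(γ, δ)`-Hamilton `d`-vicinity of a `k`-graph on `t = V.card` vertices. -/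
def IsHamVicinity (k d : ℕ) (γ δ : ℝ) (V : Finset A) (E : Finset (Finset A))
    (C : Finset A → Finset (Finset A)) : Prop :=
  (∀ S ∈ shadow d E, C S ⊆ link S E) ∧
  (∀ S ∈ shadow d E, TightlyConnected (k - d) (C S)) ∧
  (∀ S ∈ shadow d E, ∀ S' ∈ shadow d E, (C S ∩ C S').Nonempty) ∧
  (∀ S ∈ shadow d E, HasSwitcher (C S)) ∧
  HasArc k d E C ∧
  (∀ S ∈ shadow d E, HasFracMatching (C S) ((1 / (k : ℝ) + γ) * (V.card : ℝ))) ∧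
  (∀ S ∈ shadow d E, (1 - δ + γ) * ((V.card.choose (k - d) : ℕ) : ℝ) ≤ ((C S).card : ℝ))

/-- An `(a, γ, δ)`-Hamilton framework: a subgraph on vertex set `VH` with edge set `EH`
of a `k`-graph on vertex set `VR`, satisfying (F1)–(F5). -/
def IsHamFramework (k : ℕ) (a γ δ : ℝ) (VR VH : Finset A) (EH : Finset (Finset A)) : Prop :=
  (1 - a) * (VR.card : ℝ) ≤ (VH.card : ℝ) ∧
  TightlyConnected k EH ∧
  (∃ w : List A, IsClosedTightWalk k EH w ∧ w.length % k = 1 % k) ∧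
  RobustlyMatchable γ VH EH ∧
  (∀ v ∈ VH, (1 - δ + γ) * (((VH.card - 1).choose (k - 1) : ℕ) : ℝ)
      ≤ ((EH.filter fun e => v ∈ e).card : ℝ))

/-- A tight component: an edge-maximal tightly connected subgraph. -/
def IsTightComponent (k : ℕ) (E C : Finset (Finset A)) : Prop :=
  C ⊆ E ∧ TightlyConnected k C ∧
    ∀ C' : Finset (Finset A), C ⊆ C' → C' ⊆ E → TightlyConnected k C' → C' = C

/-- `δ` has the `(k,d)`-Hamilton-cycle property. -/
def HamCycleProp (k d : ℕ) (δ : ℝ) : Prop :=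
  ∀ μ : ℝ, 0 < μ → ∃ n₀ : ℕ, ∀ (B : Type) [DecidableEq B],
    ∀ (V : Finset B) (E : Finset (Finset B)),
      n₀ ≤ V.card → (∀ e ∈ E, e ⊆ V ∧ e.card = k) →
      (∀ S ⊆ V, S.card = d →
        (δ + μ) * (((V.card - d).choose (k - d) : ℕ) : ℝ)
          ≤ ((E.filter fun e => S ⊆ e).card : ℝ)) →
      HasTightHamCycle k V E

/-- `δ` has the `(k,d)`-Hamilton-framework property. -/
def HamFrameworkProp (k d : ℕ) (δ : ℝ) : Prop :=
  ∀ μ : ℝ, 0 < μ → ∃ γ₀ : ℝ, 0 < γ₀ ∧ ∀ γ : ℝ, 0 < γ → γ ≤ γ₀ →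
    ∃ α₀ : ℝ, 0 < α₀ ∧ ∀ a : ℝ, 0 < a → a ≤ α₀ →
      ∃ ε₀ : ℝ, 0 < ε₀ ∧ ∀ ε : ℝ, 0 < ε → ε ≤ ε₀ →
        ∃ t₀ : ℕ, ∀ t : ℕ, t₀ ≤ t →
          ∀ (B : Type) [DecidableEq B], ∀ (VR : Finset B) (ER : Finset (Finset B)),
            VR.card = t → (∀ e ∈ ER, e ⊆ VR ∧ e.card = k) →
            (∀ S ⊆ VR, S.card = d →
              (δ + μ) * (((t - d).choose (k - d) : ℕ) : ℝ)
                ≤ ((ER.filter fun e => S ⊆ e).card : ℝ)) →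
            ∀ I : Finset (Finset B), I ⊆ ER → (I.card : ℝ) ≤ ε * ((t.choose k : ℕ) : ℝ) →
              ∃ (VH : Finset B) (EH : Finset (Finset B)),
                VH ⊆ VR ∧ EH ⊆ ER ∧ (∀ e ∈ EH, e ⊆ VH) ∧ (∀ e ∈ EH, e ∉ I) ∧
                IsHamFramework k a γ δ VR VH EH

/-- `δ` has the `(k,d)`-Hamilton-vicinity property. -/
def HamVicinityProp (k d : ℕ) (δ : ℝ) : Prop :=
  ∀ μ : ℝ, 0 < μ → ∃ γ₀ : ℝ, 0 < γ₀ ∧ ∀ γ : ℝ, 0 < γ → γ ≤ γ₀ →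
    ∃ α₀ : ℝ, 0 < α₀ ∧ ∀ a : ℝ, 0 < a → a ≤ α₀ →
      ∃ t₀ : ℕ, ∀ t : ℕ, t₀ ≤ t →
        ∀ (B : Type) [DecidableEq B], ∀ (V : Finset B) (E : Finset (Finset B)),
          V.card = t → (∀ e ∈ E, e ⊆ V ∧ e.card = k) →
          PerturbedDegLB k d a (δ + μ) V E →
          (∀ v ∈ V, ∃ e ∈ E, v ∈ e) →
          ∃ C : Finset B → Finset (Finset B), IsHamVicinity k d γ δ V E C

/-! Let `f i` count the vertices of `X` among the `k` cyclically consecutive vertices starting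
at position `i`. Consecutive windows differ in one vertex, so `f` moves by at most one per
step; as no edge meets `X` in exactly `j` vertices, `f` never equals `j` and hence stays on one
side of `j` all the way round the cycle. But every vertex lies in exactly `k` windows, so `f`
averages `k|X|/n`, which lies strictly between `j - 1` and `j + 1`. -/

theorem Function.Periodic.sum_range_add_nat {M : Type*} [AddCancelCommMonoid M] {f : ℕ → M}
    {n : ℕ} (hf : Function.Periodic f n) (m : ℕ) :
    ∑ i ∈ range n, f (i + m) = ∑ i ∈ range n, f i := by
  induction m with
  | zero => rfl
  | succ m ih =>
    have hshift : ∑ i ∈ range n, f (i + 1 + m) + f (0 + m) = ∑ i ∈ range n, f (i + m) + f m := by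
      rw [← sum_range_succ' (fun i => f (i + m)), sum_range_succ, add_comm n m, hf m]
    rw [zero_add] at hshift
    simp_rw [← ih, ← add_right_cancel hshift, add_right_comm _ 1 m, add_assoc]

theorem List.Nodup.card_toFinset_inter {l : List A} (hl : l.Nodup) (X : Finset A) :
    (l.toFinset ∩ X).card = l.countP (· ∈ X) := by
  rw [List.countP_eq_length_filter, ← List.toFinset_card_of_nodup (hl.filter _),
    List.toFinset_filter]
  simp [filter_mem_eq_inter]

theorem forall_lt_or_forall_gt_of_step_le_one {f : ℕ → ℕ} {j : ℕ}
    (hstep : ∀ i, f (i + 1) ≤ f i + 1 ∧ f i ≤ f (i + 1) + 1) (hne : ∀ i, f i ≠ j) :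
    (∀ i, f i < j) ∨ (∀ i, j < f i) := by
  have hside : ∀ i, f i < j ↔ f 0 < j := by
    intro i
    induction i with
    | zero => rfl
    | succ i ih => have := hstep i; have := hne i; have := hne (i + 1); omega
  by_cases h0 : f 0 < j
  · exact .inl fun i => (hside i).2 h0
  · exact .inr fun i => lt_of_le_of_ne (not_lt.1 ((hside i).not.2 h0)) (hne i).symm

def windowCount (X : Finset A) (w : List A) (k i : ℕ) : ℕ :=
  ((w.rotate i).take k).countP (· ∈ X)

section windowCount

variable (X : Finset A) (w : List A)

theorem card_window_inter_eq_windowCount {w : List A} (hw : w.Nodup) (k i : ℕ) :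
    (((w.rotate i).take k).toFinset ∩ X).card = windowCount X w k i :=
  ((List.nodup_rotate.2 hw).sublist (List.take_sublist _ _)).card_toFinset_inter X

theorem windowCount_one_le (i : ℕ) : windowCount X w 1 i ≤ 1 :=
  (List.countP_le_length).trans (by simp)

theorem windowCount_periodic (k : ℕ) : Function.Periodic (windowCount X w k) w.length := by
  intro i
  simp only [windowCount, ← List.rotate_mod w (i + w.length), Nat.add_mod_right, List.rotate_mod]

theorem windowCount_add {a b : ℕ} (hab : a + b ≤ w.length) (i : ℕ) :
    windowCount X w (a + b) i = windowCount X w a i + windowCount X w b (i + a) := by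
  have hrot : w.rotate (i + a) = (w.rotate i).drop a ++ (w.rotate i).take a := by
    rw [← List.rotate_rotate, List.rotate_eq_drop_append_take (by simp; omega)]
  rw [windowCount, windowCount, windowCount, List.take_add, List.countP_append, hrot,
    List.take_append_of_le_length (by simp; omega)]

theorem windowCount_eq_sum {k : ℕ} (hk : k ≤ w.length) (i : ℕ) :
    windowCount X w k i = ∑ m ∈ range k, windowCount X w 1 (i + m) := by
  induction k with
  | zero => simp [windowCount]
  | succ k ih => rw [windowCount_add X w hk, ih (by omega), sum_range_succ]

theorem sum_windowCount {k : ℕ} (hk : k ≤ w.length) :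
    ∑ i ∈ range w.length, windowCount X w k i = k * w.countP (· ∈ X) := by
  have hfull : ∑ i ∈ range w.length, windowCount X w 1 i = w.countP (· ∈ X) := by
    simpa [windowCount] using (windowCount_eq_sum X w le_rfl 0).symm
  simp_rw [windowCount_eq_sum X w hk, sum_comm (s := range w.length),
    (windowCount_periodic X w 1).sum_range_add_nat, hfull, sum_const, card_range, smul_eq_mul]

theorem windowCount_succ_le {k : ℕ} (hk : k < w.length) (i : ℕ) :
    windowCount X w k (i + 1) ≤ windowCount X w k i + 1 ∧
      windowCount X w k i ≤ windowCount X w k (i + 1) + 1 := by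
  have h₁ := windowCount_add X w (a := 1) (b := k) (by omega) i
  rw [add_comm 1 k] at h₁
  have h₂ := windowCount_add X w (a := k) (b := 1) (by omega) i
  have := windowCount_one_le X w i
  have := windowCount_one_le X w (i + k)
  omega

end windowCount

theorem han_zhao_construction_general {B : Type*} [DecidableEq B] (k j : ℕ)
    (V X : Finset B) (hXV : X ⊆ V) (hn : k + 1 ≤ V.card)
    (hlow : (j - 1) * V.card < k * X.card) (hhigh : k * X.card < (j + 1) * V.card) :
    ¬ HasTightHamCycle k V ((V.powersetCard k).filter fun S => (S ∩ X).card ≠ j) := by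
  rintro ⟨w, hnd, rfl, hkn, hedge⟩
  rw [List.toFinset_card_of_nodup hnd] at hn hlow hhigh
  have hcount : ∀ i, windowCount X w k i ≠ j := by
    intro i
    rw [← windowCount_periodic X w k |>.map_mod_nat i, ← card_window_inter_eq_windowCount X hnd]
    exact (mem_filter.1 (hedge _ (Nat.mod_lt i (by omega)))).2
  have hsum : ∑ i ∈ range w.length, windowCount X w k i = k * X.card := by
    rw [sum_windowCount X w hkn, ← hnd.card_toFinset_inter, inter_eq_right.2 hXV]
  rcases forall_lt_or_forall_gt_of_step_le_one (windowCount_succ_le X w (by omega)) hcount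
    with hbelow | habove
  · have hbound : ∑ i ∈ range w.length, windowCount X w k i ≤ ∑ _i ∈ range w.length, (j - 1) :=
      sum_le_sum fun i _ => Nat.le_sub_one_of_lt (hbelow i)
    simp only [sum_const, card_range, smul_eq_mul, hsum] at hbound
    linarith [mul_comm (j - 1) w.length]
  · have hbound : ∑ _i ∈ range w.length, (j + 1) ≤ ∑ i ∈ range w.length, windowCount X w k i :=
      sum_le_sum fun i _ => habove i
    simp only [sum_const, card_range, smul_eq_mul, hsum] at hbound
    linarith [mul_comm (j + 1) w.length]

/-- the Han–Zhao construction has no tight Hamilton cycle. -/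
theorem han_zhao_construction {B : Type*} [DecidableEq B] (k j : ℕ) (hk : 2 ≤ k)
    (hj1 : 1 ≤ j) (hjk : j ≤ k - 1) (V X : Finset B) (hXV : X ⊆ V) (hn : k + 1 ≤ V.card)
    (hlow : (j - 1) * V.card < k * X.card) (hhigh : k * X.card < (j + 1) * V.card) :
    ¬ HasTightHamCycle k V ((V.powersetCard k).filter fun S => (S ∩ X).card ≠ j) :=
  han_zhao_construction_general k j V X hXV hn hlow hhigh
end

section
/- (Perturbed degree lemma.) Let 1 ≤ d ≤ k−1 and δ > 0. There exists α_0 > 0 (depending on k and δ) such that for every 0 < α ≤ α_0 there exists ε_0 > 0 such that for every 0 < ε ≤ ε_0 there exists t_0 such that for every t ≥ t_0 the following holds: if R is a k-graph on t vertices with minimum relative d-degree at least δ, and I is a subgraph of R with at most ε·(t choose k) edges, then there exists a subgraph R' of R on all t vertices containing no edge of I which has α-perturbed minimum relative d-degree at least δ − α. -/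
open Finset

variable {A : Type*} [DecidableEq A]

/-! Call `T` light if it lies in fewer than a `β ^ (d + 1 - #T)` fraction of the `k`-sets
through it that belong to `I`, and keep the edges of `E` outside `I` all of whose sets of size
at most `d` are light. Double counting shows that a light set has few heavy supersets, because
the threshold gains a factor `β` per added vertex; as `∅` is light once `ε ≪ β ^ (d + 1)`,
there are also few heavy sets altogether. An edge through a set `S` whose subsets are all light
is lost only if it lies in `I` or contains a heavy set extending a subset of `S`, so `S` keeps
all but an `a`-fraction of its degree: this is (P1), and it puts `S` into the shadow. Hence a
`j`-set outside the shadow contains a heavy set, and counting those gives (P2) and (P3). -/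

namespace Nat

theorem choose_succ_le_two_mul {n m : ℕ} (h : 2 * m ≤ n + 1) :
    (n + 1).choose m ≤ 2 * n.choose m := by
  refine Nat.le_of_mul_le_mul_right ?_ (show 0 < n + 1 - m by omega)
  calc (n + 1).choose m * (n + 1 - m) = n.choose m * (n + 1) := (choose_mul_succ_eq n m).symm
    _ ≤ n.choose m * (2 * (n + 1 - m)) := Nat.mul_le_mul_left _ (by omega)
    _ = 2 * n.choose m * (n + 1 - m) := by ring

theorem choose_add_le_two_pow_mul {n m : ℕ} (h : 2 * m ≤ n + 1) (i : ℕ) :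
    (n + i).choose m ≤ 2 ^ i * n.choose m := by
  induction i with
  | zero => simp
  | succ i ih =>
    calc (n + (i + 1)).choose m ≤ 2 * (n + i).choose m :=
          choose_succ_le_two_mul (n := n + i) (by omega)
      _ ≤ 2 * (2 ^ i * n.choose m) := Nat.mul_le_mul_left 2 ih
      _ = 2 ^ (i + 1) * n.choose m := by ring

theorem choose_mul_choose_le_four_pow_mul {n k j u m : ℕ} (huj : u ≤ j) (hjm : j + m ≤ k)
    (hkn : 2 * k ≤ n) :
    (n - u).choose m * (n - (j + m)).choose (k - (j + m)) ≤ 4 ^ k * (n - j).choose (k - j) := by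
  have hshift : (n - u).choose m ≤ 2 ^ k * (n - j).choose m :=
    calc (n - u).choose m = (n - j + (j - u)).choose m := by congr 1; omega
      _ ≤ 2 ^ (j - u) * (n - j).choose m := choose_add_le_two_pow_mul (by omega) _
      _ ≤ 2 ^ k * (n - j).choose m :=
        Nat.mul_le_mul_right _ (Nat.pow_le_pow_right two_pos (by omega))
  have hsplit : (n - j).choose m * (n - (j + m)).choose (k - (j + m))
      = (n - j).choose (k - j) * (k - j).choose m := by
    rw [choose_mul (show m ≤ k - j by omega), show n - j - m = n - (j + m) by omega,
      show k - j - m = k - (j + m) by omega]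
  have hsmall : (k - j).choose m ≤ 2 ^ k :=
    (choose_le_two_pow _ _).trans (Nat.pow_le_pow_right two_pos (by omega))
  calc (n - u).choose m * (n - (j + m)).choose (k - (j + m))
      ≤ 2 ^ k * ((n - j).choose m * (n - (j + m)).choose (k - (j + m))) := by
        rw [← mul_assoc]; exact Nat.mul_le_mul_right _ hshift
    _ ≤ 2 ^ k * ((n - j).choose (k - j) * 2 ^ k) := by
        rw [hsplit]; exact Nat.mul_le_mul_left _ (Nat.mul_le_mul_left _ hsmall)
    _ = 4 ^ k * (n - j).choose (k - j) := by
        rw [show (4 : ℕ) = 2 * 2 by rfl, mul_pow]; ring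

end Nat

section Counting

variable {V : Finset A} {E : Finset (Finset A)} {k : ℕ}

theorem degree_le_choose (hE : ∀ e ∈ E, e ⊆ V ∧ #e = k) {X : Finset A} (hXV : X ⊆ V)
    (hXk : #X ≤ k) : #{e ∈ E | X ⊆ e} ≤ (#V - #X).choose (k - #X) := by
  rw [← card_filter_powersetCard_subset X V k hXV hXk]
  refine card_le_card fun e he => ?_
  rw [mem_filter] at he ⊢
  exact ⟨mem_powersetCard.2 (hE e he.1), he.2⟩

theorem sum_degree_supersets (hE : ∀ e ∈ E, e ⊆ V ∧ #e = k) {U : Finset A} {r : ℕ}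
    (hUr : #U ≤ r) :
    ∑ T ∈ V.powersetCard r with U ⊆ T, #{e ∈ E | T ⊆ e}
      = #{e ∈ E | U ⊆ e} * (k - #U).choose (r - #U) := by
  have hcount : ∀ e ∈ E, #{T ∈ {T ∈ V.powersetCard r | U ⊆ T} | T ⊆ e}
      = if U ⊆ e then (k - #U).choose (r - #U) else 0 := by
    intro e he
    split_ifs with hUe
    · rw [← (hE e he).2, ← card_filter_powersetCard_subset U e r hUe hUr, filter_filter]
      congr 1
      ext T
      simp only [mem_filter, mem_powersetCard]
      exact ⟨fun ⟨⟨_, hTr⟩, hUT, hTe⟩ => ⟨⟨hTe, hTr⟩, hUT⟩,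
        fun ⟨⟨hTe, hTr⟩, hUT⟩ => ⟨⟨hTe.trans (hE e he).1, hTr⟩, hUT, hTe⟩⟩
    · refine card_eq_zero.2 (filter_eq_empty_iff.2 fun T hT hTe => hUe ?_)
      exact (mem_filter.1 hT).2.trans hTe
  calc ∑ T ∈ V.powersetCard r with U ⊆ T, #{e ∈ E | T ⊆ e}
      = ∑ e ∈ E, #{T ∈ {T ∈ V.powersetCard r | U ⊆ T} | T ⊆ e} :=
        sum_card_bipartiteAbove_eq_sum_card_bipartiteBelow _
    _ = #{e ∈ E | U ⊆ e} * (k - #U).choose (r - #U) := by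
        rw [sum_congr rfl hcount, ← sum_filter, sum_const, smul_eq_mul]

theorem degree_ge_of_minDegree (hE : ∀ e ∈ E, e ⊆ V ∧ #e = k) {d : ℕ} (hdk : d ≤ k)
    {δ : ℝ} (hdeg : ∀ S ⊆ V, #S = d →
      δ * (((#V - d).choose (k - d) : ℕ) : ℝ) ≤ (#{e ∈ E | S ⊆ e} : ℝ))
    {S : Finset A} (hSV : S ⊆ V) (hSd : #S ≤ d) :
    δ * (((#V - #S).choose (k - #S) : ℕ) : ℝ) ≤ (#{e ∈ E | S ⊆ e} : ℝ) := by
  set j := #S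
  have hpos : (0 : ℝ) < ((k - j).choose (d - j) : ℕ) := by
    exact_mod_cast Nat.choose_pos (by omega)
  have hsplit : (#V - j).choose (k - j) * (k - j).choose (d - j)
      = (#V - j).choose (d - j) * (#V - d).choose (k - d) := by
    rw [Nat.choose_mul (by omega), show #V - j - (d - j) = #V - d by omega,
      show k - j - (d - j) = k - d by omega]
  refine le_of_mul_le_mul_right ?_ hpos
  calc δ * (((#V - j).choose (k - j) : ℕ) : ℝ) * (((k - j).choose (d - j) : ℕ) : ℝ)
      = ∑ D ∈ V.powersetCard d with S ⊆ D, δ * (((#V - d).choose (k - d) : ℕ) : ℝ) := by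
        rw [sum_const, card_filter_powersetCard_subset S V d hSV hSd, nsmul_eq_mul, mul_assoc,
          ← Nat.cast_mul, hsplit, Nat.cast_mul]
        ring
    _ ≤ ∑ D ∈ V.powersetCard d with S ⊆ D, (#{e ∈ E | D ⊆ e} : ℝ) := by
        refine sum_le_sum fun D hD => ?_
        rw [mem_filter, mem_powersetCard] at hD
        exact hdeg D hD.1.1 hD.1.2
    _ = (#{e ∈ E | S ⊆ e} : ℝ) * (((k - j).choose (d - j) : ℕ) : ℝ) := by
        rw [← Nat.cast_mul, ← sum_degree_supersets hE hSd, Nat.cast_sum]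

/-- Double counting the pairs `T ⊆ e` with `e ∈ E`: few edges through `U` leave room for
few supersets of `U` with many edges. -/
theorem card_heavy_supersets_mul_le (hE : ∀ e ∈ E, e ⊆ V ∧ #e = k) {U : Finset A} {r : ℕ}
    (hUr : #U ≤ r) (hrk : r ≤ k) (hkV : k ≤ #V) {θ₁ θ₂ : ℝ}
    (hU : (#{e ∈ E | U ⊆ e} : ℝ) ≤ θ₁ * (((#V - #U).choose (k - #U) : ℕ) : ℝ)) :
    (#{T ∈ V.powersetCard r | U ⊆ T ∧
        θ₂ * (((#V - r).choose (k - r) : ℕ) : ℝ) ≤ (#{e ∈ E | T ⊆ e} : ℝ)} : ℝ) * θ₂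
      ≤ θ₁ * (((#V - #U).choose (r - #U) : ℕ) : ℝ) := by
  set u := #U
  have hpos : (0 : ℝ) < ((#V - r).choose (k - r) : ℕ) := by
    exact_mod_cast Nat.choose_pos (by omega)
  have hsplit : (#V - u).choose (k - u) * (k - u).choose (r - u)
      = (#V - u).choose (r - u) * (#V - r).choose (k - r) := by
    rw [Nat.choose_mul (by omega), show #V - u - (r - u) = #V - r by omega,
      show k - u - (r - u) = k - r by omega]
  refine le_of_mul_le_mul_right ?_ hpos
  calc _ = ∑ T ∈ V.powersetCard r with U ⊆ T ∧
          θ₂ * (((#V - r).choose (k - r) : ℕ) : ℝ) ≤ (#{e ∈ E | T ⊆ e} : ℝ),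
        θ₂ * (((#V - r).choose (k - r) : ℕ) : ℝ) := by
        rw [sum_const, nsmul_eq_mul, mul_assoc]
    _ ≤ ∑ T ∈ V.powersetCard r with U ⊆ T ∧
          θ₂ * (((#V - r).choose (k - r) : ℕ) : ℝ) ≤ (#{e ∈ E | T ⊆ e} : ℝ),
        (#{e ∈ E | T ⊆ e} : ℝ) := sum_le_sum fun T hT => (mem_filter.1 hT).2.2
    _ ≤ ∑ T ∈ V.powersetCard r with U ⊆ T, (#{e ∈ E | T ⊆ e} : ℝ) := by
        rw [← filter_filter]
        exact sum_le_sum_of_subset_of_nonneg (filter_subset _ _) fun _ _ _ => by positivity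
    _ = (#{e ∈ E | U ⊆ e} : ℝ) * (((k - u).choose (r - u) : ℕ) : ℝ) := by
        rw [← Nat.cast_sum, sum_degree_supersets hE hUr, Nat.cast_mul]
    _ ≤ θ₁ * (((#V - u).choose (k - u) : ℕ) : ℝ) * (((k - u).choose (r - u) : ℕ) : ℝ) :=
        mul_le_mul_of_nonneg_right hU (by positivity)
    _ = _ := by rw [mul_assoc, ← Nat.cast_mul, hsplit, Nat.cast_mul, mul_assoc]

end Counting

theorem mem_shadow_iff {j : ℕ} {E : Finset (Finset A)} {S : Finset A} :
    S ∈ shadow j E ↔ ∃ e ∈ E, S ⊆ e ∧ #S = j := by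
  simp [_root_.shadow, mem_powersetCard]

def IsLight (I : Finset (Finset A)) (n k d : ℕ) (β : ℝ) (T : Finset A) : Prop :=
  (#{e ∈ I | T ⊆ e} : ℝ) < β ^ (d + 1 - #T) * (((n - #T).choose (k - #T) : ℕ) : ℝ)

open Classical in
noncomputable def lightEdges (E I : Finset (Finset A)) (n k d : ℕ) (β : ℝ) :
    Finset (Finset A) :=
  {e ∈ E | e ∉ I ∧ ∀ T ⊆ e, #T ≤ d → IsLight I n k d β T}

section Light

open Classical

variable {V : Finset A} {E F I : Finset (Finset A)} {k d j : ℕ} {β δ a ε : ℝ}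

theorem lightEdges_subset {n : ℕ} : lightEdges E I n k d β ⊆ E :=
  filter_subset _ _

theorem notMem_of_mem_lightEdges {n : ℕ} {e : Finset A} (he : e ∈ lightEdges E I n k d β) :
    e ∉ I :=
  (mem_filter.1 he).2.1

theorem isLight_of_mem_lightEdges {n : ℕ} {e T : Finset A} (he : e ∈ lightEdges E I n k d β)
    (hTe : T ⊆ e) (hTd : #T ≤ d) : IsLight I n k d β T :=
  (mem_filter.1 he).2.2 T hTe hTd

theorem not_isLight_iff {n r : ℕ} {T : Finset A} (hT : #T = r) :
    ¬IsLight I n k d β T ↔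
      β ^ (d + 1 - r) * (((n - r).choose (k - r) : ℕ) : ℝ) ≤ (#{e ∈ I | T ⊆ e} : ℝ) := by
  rw [IsLight, not_lt, hT]

theorem isLight_empty (hkV : k ≤ #V) (hIε : (#I : ℝ) ≤ ε * (((#V).choose k : ℕ) : ℝ))
    (hε : ε < β ^ (d + 1)) : IsLight I #V k d β ∅ := by
  have hpos : (0 : ℝ) < (((#V).choose k : ℕ) : ℝ) := by exact_mod_cast Nat.choose_pos hkV
  simp only [IsLight, card_empty, Nat.sub_zero, empty_subset, filter_true]
  exact hIε.trans_lt (mul_lt_mul_of_pos_right hε hpos)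

theorem card_not_isLight_supersets_le (hI : ∀ e ∈ I, e ⊆ V ∧ #e = k) (hβ : 0 < β)
    (hβ1 : β ≤ 1) (hkV : k ≤ #V) {U : Finset A} (hU : IsLight I #V k d β U) (hUd : #U ≤ d)
    {m : ℕ} (hm : 1 ≤ m) (hUm : #U + m ≤ k) :
    (#{T ∈ V.powersetCard (#U + m) | U ⊆ T ∧ ¬IsLight I #V k d β T} : ℝ)
      ≤ β * (((#V - #U).choose m : ℕ) : ℝ) := by
  set θ := β ^ (d + 1 - (#U + m))
  have hθ : 0 < θ := by positivity
  have hθU : β ^ (d + 1 - #U) ≤ β * θ := by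
    rw [← pow_succ']; exact pow_le_pow_of_le_one hβ.le hβ1 (by omega)
  have key := card_heavy_supersets_mul_le hI (r := #U + m) (by omega) hUm hkV (θ₂ := θ) hU.le
  rw [show #U + m - #U = m by omega] at key
  rw [filter_congr fun T hT => and_congr_right' (not_isLight_iff (mem_powersetCard.1 hT).2)]
  refine le_of_mul_le_mul_right ?_ hθ
  calc _ ≤ _ := key
    _ ≤ β * θ * (((#V - #U).choose m : ℕ) : ℝ) :=
        mul_le_mul_of_nonneg_right hθU (by positivity)
    _ = _ := by ring

theorem card_not_isLight_mul_le (hI : ∀ e ∈ I, e ⊆ V ∧ #e = k) (hβ : 0 < β) (hβ1 : β ≤ 1)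
    (hkV : k ≤ #V) (hIε : (#I : ℝ) ≤ ε * (((#V).choose k : ℕ) : ℝ)) {j : ℕ} (hjk : j ≤ k) :
    (#{T ∈ V.powersetCard j | ¬IsLight I #V k d β T} : ℝ) * β ^ (d + 1)
      ≤ ε * (((#V).choose j : ℕ) : ℝ) := by
  have key := card_heavy_supersets_mul_le hI (U := ∅) (r := j) (Nat.zero_le _) hjk hkV
    (θ₁ := ε) (θ₂ := β ^ (d + 1 - j)) (by simpa using hIε)
  simp only [card_empty, Nat.sub_zero, empty_subset, true_and] at key
  rw [filter_congr fun T hT => not_isLight_iff (mem_powersetCard.1 hT).2]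
  exact (mul_le_mul_of_nonneg_left (pow_le_pow_of_le_one hβ.le hβ1 (by omega))
    (by positivity)).trans key

theorem degree_le_degree_lightEdges_add {n : ℕ} (S : Finset A) :
    #{e ∈ E | S ⊆ e} ≤ #{e ∈ lightEdges E I n k d β | S ⊆ e} + #{e ∈ I | S ⊆ e}
      + #{e ∈ E | S ⊆ e ∧ ∃ T ⊆ e, ¬IsLight I n k d β T} := by
  refine (card_le_card fun e he => ?_).trans
    ((card_union_le _ _).trans (Nat.add_le_add_right (card_union_le _ _) _))
  simp only [lightEdges, mem_union, mem_filter] at he ⊢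
  by_cases heI : e ∈ I
  · exact .inl (.inr ⟨heI, he.2⟩)
  by_cases hlight : ∀ T ⊆ e, #T ≤ d → IsLight I n k d β T
  · exact .inl (.inl ⟨⟨he.1, heI, hlight⟩, he.2⟩)
  push Not at hlight
  obtain ⟨T, hTe, -, hT⟩ := hlight
  exact .inr ⟨he.1, he.2, T, hTe, hT⟩

theorem sum_degree_heavy_supersets_le (hE : ∀ e ∈ E, e ⊆ V ∧ #e = k)
    (hI : ∀ e ∈ I, e ⊆ V ∧ #e = k) (hβ : 0 < β) (hβ1 : β ≤ 1) (hkV : 2 * k ≤ #V)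
    {S U : Finset A} (hSV : S ⊆ V) (hSd : #S ≤ d) (hUS : U ⊆ S) (hU : IsLight I #V k d β U)
    {m : ℕ} (hm : 1 ≤ m) (hSm : #S + m ≤ k) :
    (∑ T ∈ V.powersetCard (#U + m) with U ⊆ T ∧ ¬IsLight I #V k d β T ∧ T ∩ S = U,
        #{e ∈ E | S ∪ T ⊆ e} : ℝ)
      ≤ 4 ^ k * β * (((#V - #S).choose (k - #S) : ℕ) : ℝ) := by
  have hUS' : #U ≤ #S := card_le_card hUS
  have hdegree : ∀ T ∈ {T ∈ V.powersetCard (#U + m) |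
      U ⊆ T ∧ ¬IsLight I #V k d β T ∧ T ∩ S = U},
      #{e ∈ E | S ∪ T ⊆ e} ≤ (#V - (#S + m)).choose (k - (#S + m)) := by
    intro T hT
    simp only [mem_filter, mem_powersetCard] at hT
    obtain ⟨⟨hTV, hTc⟩, -, -, hTS⟩ := hT
    have hcard : #(S ∪ T) = #S + m := by
      have h1 := card_sdiff_add_card T S
      have h2 := card_sdiff_add_card_inter T S
      rw [hTS, hTc] at h2
      rw [union_comm, ← h1]
      omega
    rw [← hcard]
    exact degree_le_choose hE (union_subset hSV hTV) (by omega)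
  have hheavy := card_not_isLight_supersets_le hI hβ hβ1 (by omega) hU (by omega) hm (by omega)
  have hbinom := Nat.choose_mul_choose_le_four_pow_mul (n := #V) hUS' hSm hkV
  calc (∑ T ∈ V.powersetCard (#U + m) with U ⊆ T ∧ ¬IsLight I #V k d β T ∧ T ∩ S = U,
        #{e ∈ E | S ∪ T ⊆ e} : ℝ)
      ≤ #{T ∈ V.powersetCard (#U + m) | U ⊆ T ∧ ¬IsLight I #V k d β T ∧ T ∩ S = U}
          * (((#V - (#S + m)).choose (k - (#S + m)) : ℕ) : ℝ) := by
        exact_mod_cast (sum_le_card_nsmul _ _ _ hdegree).trans_eq (smul_eq_mul _ _)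
    _ ≤ #{T ∈ V.powersetCard (#U + m) | U ⊆ T ∧ ¬IsLight I #V k d β T}
          * (((#V - (#S + m)).choose (k - (#S + m)) : ℕ) : ℝ) := by
        gcongr
        exact And.left
    _ ≤ β * (((#V - #U).choose m : ℕ) : ℝ)
          * (((#V - (#S + m)).choose (k - (#S + m)) : ℕ) : ℝ) := by gcongr
    _ ≤ β * (4 ^ k * (((#V - #S).choose (k - #S) : ℕ) : ℝ)) := by
        rw [mul_assoc]; exact mul_le_mul_of_nonneg_left (by exact_mod_cast hbinom) hβ.le
    _ = _ := by ring

theorem card_heavy_edges_le (hE : ∀ e ∈ E, e ⊆ V ∧ #e = k) (hI : ∀ e ∈ I, e ⊆ V ∧ #e = k)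
    (hβ : 0 < β) (hβ1 : β ≤ 1) (hdk : d ≤ k) (hkV : 2 * k ≤ #V) {S : Finset A} (hSV : S ⊆ V)
    (hSd : #S ≤ d) (hS : ∀ T ⊆ S, IsLight I #V k d β T) :
    (#{e ∈ E | S ⊆ e ∧ ∃ T ⊆ e, ¬IsLight I #V k d β T} : ℝ)
      ≤ k * 8 ^ k * β * (((#V - #S).choose (k - #S) : ℕ) : ℝ) := by
  set heavy := fun U m =>
    {T ∈ V.powersetCard (#U + m) | U ⊆ T ∧ ¬IsLight I #V k d β T ∧ T ∩ S = U}
  have hcover : {e ∈ E | S ⊆ e ∧ ∃ T ⊆ e, ¬IsLight I #V k d β T}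
      ⊆ S.powerset.biUnion fun U => (Icc 1 (k - #S)).biUnion fun m =>
          (heavy U m).biUnion fun T => {e ∈ E | S ∪ T ⊆ e} := by
    intro e he
    simp only [mem_filter] at he
    obtain ⟨heE, hSe, T, hTe, hT⟩ := he
    have hTS : (T \ S).Nonempty := sdiff_nonempty.2 fun h => hT (hS T h)
    have hcard := card_sdiff_add_card_inter T S
    have hk : #(T \ S) + #S ≤ k :=
      (hE e heE).2 ▸ card_sdiff_add_card T S ▸ card_le_card (union_subset hTe hSe)
    simp only [mem_biUnion, mem_powerset, mem_Icc, heavy, mem_filter, mem_powersetCard]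
    exact ⟨T ∩ S, inter_subset_right, #(T \ S), ⟨hTS.card_pos, by omega⟩, T,
      ⟨⟨hTe.trans (hE e heE).1, by omega⟩, inter_subset_left, hT, rfl⟩, heE,
      union_subset hSe hTe⟩
  have hcount : #{e ∈ E | S ⊆ e ∧ ∃ T ⊆ e, ¬IsLight I #V k d β T}
      ≤ ∑ U ∈ S.powerset, ∑ m ∈ Icc 1 (k - #S), ∑ T ∈ heavy U m, #{e ∈ E | S ∪ T ⊆ e} :=
    (card_le_card hcover).trans <| card_biUnion_le.trans <| sum_le_sum fun _ _ =>
      card_biUnion_le.trans <| sum_le_sum fun _ _ => card_biUnion_le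
  calc (#{e ∈ E | S ⊆ e ∧ ∃ T ⊆ e, ¬IsLight I #V k d β T} : ℝ)
      ≤ ∑ U ∈ S.powerset, ∑ m ∈ Icc 1 (k - #S),
          (∑ T ∈ heavy U m, #{e ∈ E | S ∪ T ⊆ e} : ℝ) := by
        exact_mod_cast hcount
    _ ≤ ∑ _U ∈ S.powerset, ∑ _m ∈ Icc 1 (k - #S),
          4 ^ k * β * (((#V - #S).choose (k - #S) : ℕ) : ℝ) := by
        refine sum_le_sum fun U hU => sum_le_sum fun m hm => ?_
        rw [mem_powerset] at hU
        rw [mem_Icc] at hm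
        exact sum_degree_heavy_supersets_le hE hI hβ hβ1 hkV hSV hSd hU (hS U hU) hm.1 (by omega)
    _ = (2 ^ #S * (k - #S) : ℕ) * (4 ^ k * β * (((#V - #S).choose (k - #S) : ℕ) : ℝ)) := by
        simp only [sum_const, card_powerset, Nat.card_Icc, Nat.add_sub_cancel, nsmul_eq_mul,
          Nat.cast_mul]
        ring
    _ ≤ (2 ^ k * k : ℕ) * (4 ^ k * β * (((#V - #S).choose (k - #S) : ℕ) : ℝ)) := by
        have h : 2 ^ #S * (k - #S) ≤ 2 ^ k * k :=
          Nat.mul_le_mul (Nat.pow_le_pow_right two_pos (by omega)) (Nat.sub_le _ _)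
        exact mul_le_mul_of_nonneg_right (by exact_mod_cast h) (by positivity)
    _ = _ := by
        rw [show (8 : ℝ) = 2 * 4 by norm_num, mul_pow]
        push_cast
        ring

theorem degree_lightEdges_ge (hE : ∀ e ∈ E, e ⊆ V ∧ #e = k) (hIE : I ⊆ E) (hdk : d ≤ k)
    (hkV : 2 * k ≤ #V)
    (hdeg : ∀ S ⊆ V, #S = d →
      δ * (((#V - d).choose (k - d) : ℕ) : ℝ) ≤ (#{e ∈ E | S ⊆ e} : ℝ))
    (hβ : 0 < β) (hβ1 : β ≤ 1) (hβa : (1 + k * 8 ^ k) * β ≤ a)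
    {S : Finset A} (hSV : S ⊆ V) (hSd : #S ≤ d) (hS : ∀ T ⊆ S, IsLight I #V k d β T) :
    (δ - a) * (((#V - #S).choose (k - #S) : ℕ) : ℝ)
      ≤ (#{e ∈ lightEdges E I #V k d β | S ⊆ e} : ℝ) := by
  have hI : ∀ e ∈ I, e ⊆ V ∧ #e = k := fun e he => hE e (hIE he)
  set C : ℝ := (((#V - #S).choose (k - #S) : ℕ) : ℝ)
  have hC : 0 ≤ C := by positivity
  have hmin := degree_ge_of_minDegree hE hdk hdeg hSV hSd
  have hsplit : (#{e ∈ E | S ⊆ e} : ℝ) ≤ #{e ∈ lightEdges E I #V k d β | S ⊆ e}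
      + #{e ∈ I | S ⊆ e} + #{e ∈ E | S ⊆ e ∧ ∃ T ⊆ e, ¬IsLight I #V k d β T} := by
    exact_mod_cast degree_le_degree_lightEdges_add S
  have hIS : (#{e ∈ I | S ⊆ e} : ℝ) ≤ β * C :=
    (hS S subset_rfl).le.trans <| mul_le_mul_of_nonneg_right
      (pow_le_of_le_one hβ.le hβ1 (by omega)) hC
  have hheavy := card_heavy_edges_le hE hI hβ hβ1 hdk hkV hSV hSd hS
  have hloss := mul_le_mul_of_nonneg_right hβa hC
  linarith

theorem mem_shadow_lightEdges (hE : ∀ e ∈ E, e ⊆ V ∧ #e = k) (hIE : I ⊆ E) (hdk : d ≤ k)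
    (hkV : 2 * k ≤ #V)
    (hdeg : ∀ S ⊆ V, #S = d →
      δ * (((#V - d).choose (k - d) : ℕ) : ℝ) ≤ (#{e ∈ E | S ⊆ e} : ℝ))
    (hβ : 0 < β) (hβ1 : β ≤ 1) (hβa : (1 + k * 8 ^ k) * β ≤ a) (haδ : a < δ)
    {S : Finset A} (hSV : S ⊆ V) (hSd : #S ≤ d) (hS : ∀ T ⊆ S, IsLight I #V k d β T) :
    S ∈ shadow #S (lightEdges E I #V k d β) := by
  have hpos : 0 < (δ - a) * (((#V - #S).choose (k - #S) : ℕ) : ℝ) :=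
    mul_pos (by linarith) (by exact_mod_cast Nat.choose_pos (by omega))
  obtain ⟨e, he⟩ := card_pos.1 <| by
    exact_mod_cast hpos.trans_le (degree_lightEdges_ge hE hIE hdk hkV hdeg hβ hβ1 hβa hSV hSd hS)
  rw [mem_filter] at he
  exact mem_shadow_iff.2 ⟨e, he.1, he.2, rfl⟩

theorem card_notMem_shadow_le (hI : ∀ e ∈ I, e ⊆ V ∧ #e = k) (hβ : 0 < β) (hβ1 : β ≤ 1)
    (hkV : k ≤ #V) (hIε : (#I : ℝ) ≤ ε * (((#V).choose k : ℕ) : ℝ)) (hε : 0 ≤ ε)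
    (hεa : 2 ^ k * ε ≤ a * β ^ (d + 1)) (hjk : j ≤ k)
    (hmem : ∀ S ⊆ V, #S = j → (∀ T ⊆ S, IsLight I #V k d β T) → S ∈ shadow j F) :
    (#{S ∈ V.powersetCard j | S ∉ shadow j F} : ℝ) ≤ a * (((#V).choose j : ℕ) : ℝ) := by
  set heavy := fun i => {T ∈ V.powersetCard i | ¬IsLight I #V k d β T}
  have hcover : {S ∈ V.powersetCard j | S ∉ shadow j F}
      ⊆ (range (j + 1)).biUnion fun i =>
          (heavy i).biUnion fun T => {S ∈ V.powersetCard j | T ⊆ S} := by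
    intro S hS
    simp only [mem_filter, mem_powersetCard] at hS
    obtain ⟨⟨hSV, hSj⟩, hSF⟩ := hS
    obtain ⟨T, hTS, hT⟩ : ∃ T ⊆ S, ¬IsLight I #V k d β T := by
      by_contra! h
      exact hSF (hmem S hSV hSj h)
    simp only [mem_biUnion, mem_range, heavy, mem_filter, mem_powersetCard]
    exact ⟨#T, by have := card_le_card hTS; omega, T, ⟨⟨hTS.trans hSV, rfl⟩, hT⟩,
      ⟨hSV, hSj⟩, hTS⟩
  have hcount : #{S ∈ V.powersetCard j | S ∉ shadow j F}
      ≤ ∑ i ∈ range (j + 1), #(heavy i) * (#V - i).choose (j - i) := by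
    refine (card_le_card hcover).trans <| card_biUnion_le.trans <| sum_le_sum fun i hi =>
      card_biUnion_le.trans <| (sum_le_card_nsmul _ _ _ fun T hT => ?_).trans_eq (smul_eq_mul _ _)
    simp only [heavy, mem_filter, mem_powersetCard] at hT
    rw [card_filter_powersetCard_subset T V j hT.1.1 (by simp at hi; omega), hT.1.2]
  have hpos : 0 < β ^ (d + 1) := by positivity
  refine le_of_mul_le_mul_right ?_ hpos
  calc (#{S ∈ V.powersetCard j | S ∉ shadow j F} : ℝ) * β ^ (d + 1)
      ≤ ∑ i ∈ range (j + 1), (#(heavy i) : ℝ) * β ^ (d + 1)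
          * (((#V - i).choose (j - i) : ℕ) : ℝ) := by
        refine (mul_le_mul_of_nonneg_right ((Nat.cast_le (α := ℝ)).2 hcount) hpos.le).trans_eq ?_
        rw [Nat.cast_sum, sum_mul]
        exact sum_congr rfl fun i _ => by push_cast; ring
    _ ≤ ∑ i ∈ range (j + 1), ε * (((#V).choose i : ℕ) : ℝ) * (((#V - i).choose (j - i) : ℕ) : ℝ) :=
        sum_le_sum fun i hi => mul_le_mul_of_nonneg_right
          (card_not_isLight_mul_le hI hβ hβ1 hkV hIε (by simp at hi; omega)) (by positivity)
    _ = ε * (((#V).choose j : ℕ) : ℝ) * ((∑ i ∈ range (j + 1), j.choose i : ℕ) : ℝ) := by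
        rw [Nat.cast_sum, mul_sum]
        refine sum_congr rfl fun i hi => ?_
        rw [mul_assoc, ← Nat.cast_mul, ← Nat.choose_mul (by simp at hi; omega), Nat.cast_mul]
        ring
    _ = ε * (((#V).choose j : ℕ) : ℝ) * 2 ^ j := by rw [Nat.sum_range_choose]; push_cast; ring
    _ ≤ a * (((#V).choose j : ℕ) : ℝ) * β ^ (d + 1) := by
        have h2 : (2 : ℝ) ^ j ≤ 2 ^ k := pow_le_pow_right₀ one_le_two hjk
        nlinarith [mul_le_mul_of_nonneg_left h2 hε, (by positivity : (0 : ℝ) ≤ ((#V).choose j : ℕ))]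

/-- A `j`-set `S ⊇ T` outside the shadow is `T' ∪ T` for a heavy `T'` that extends a subset
of `T` by one vertex. -/
theorem card_supersets_notMem_shadow_lt (hI : ∀ e ∈ I, e ⊆ V ∧ #e = k) (hβ : 0 < β)
    (hβ1 : β ≤ 1) (hkV : 2 * k ≤ #V) (ha : 0 < a) (hβa : 2 ^ (k + 1) * β ≤ a) (hdk : d ≤ k)
    (hjd : j ≤ d)
    (hmem : ∀ S ⊆ V, #S = j → (∀ T ⊆ S, IsLight I #V k d β T) → S ∈ shadow j F)
    {T : Finset A} (hTj : #T + 1 = j) (hT : ∀ U ⊆ T, IsLight I #V k d β U) :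
    (#{S ∈ V.powersetCard j | T ⊆ S ∧ S ∉ shadow j F} : ℝ) < a * ((#V : ℝ) - j + 1) := by
  set heavy := fun U : Finset A =>
    {T' ∈ V.powersetCard (#U + 1) | U ⊆ T' ∧ ¬IsLight I #V k d β T'}
  have hcover : {S ∈ V.powersetCard j | T ⊆ S ∧ S ∉ shadow j F}
      ⊆ T.powerset.biUnion fun U => (heavy U).image (· ∪ T) := by
    intro S hS
    simp only [mem_filter, mem_powersetCard] at hS
    obtain ⟨⟨hSV, hSj⟩, hTS, hSF⟩ := hS
    obtain ⟨T', hT'S, hT'⟩ : ∃ T' ⊆ S, ¬IsLight I #V k d β T' := by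
      by_contra! h
      exact hSF (hmem S hSV hSj h)
    have hST : #(S \ T) = 1 := by rw [card_sdiff_of_subset hTS]; omega
    have hnew : T' \ T = S \ T := eq_of_subset_of_card_le (sdiff_subset_sdiff hT'S subset_rfl)
      (hST ▸ (sdiff_nonempty.2 fun h => hT' (hT T' h)).card_pos)
    have hcard := card_sdiff_add_card_inter T' T
    rw [hnew, hST] at hcard
    simp only [mem_biUnion, mem_powerset, mem_image, heavy, mem_filter, mem_powersetCard]
    refine ⟨T' ∩ T, inter_subset_right, T',
      ⟨⟨hT'S.trans hSV, by omega⟩, inter_subset_left, hT'⟩, ?_⟩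
    rw [← sdiff_union_self_eq_union, hnew, sdiff_union_of_subset hTS]
  have hcount : #{S ∈ V.powersetCard j | T ⊆ S ∧ S ∉ shadow j F} ≤ ∑ U ∈ T.powerset, #(heavy U) :=
    (card_le_card hcover).trans <| card_biUnion_le.trans <| sum_le_sum fun _ _ => card_image_le
  have h2k : (2 : ℝ) ^ k * β ≤ a / 2 := by rw [pow_succ] at hβa; linarith
  have hjV : (2 * j : ℝ) ≤ #V := by exact_mod_cast (by omega : 2 * j ≤ #V)
  calc (#{S ∈ V.powersetCard j | T ⊆ S ∧ S ∉ shadow j F} : ℝ)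
      ≤ ∑ U ∈ T.powerset, (#(heavy U) : ℝ) := by exact_mod_cast hcount
    _ ≤ ∑ _U ∈ T.powerset, β * #V := by
        refine sum_le_sum fun U hU => ?_
        have hUT := card_le_card (mem_powerset.1 hU)
        refine (card_not_isLight_supersets_le hI hβ hβ1 (by omega) (hT U (mem_powerset.1 hU))
          (by omega) le_rfl (by omega)).trans (mul_le_mul_of_nonneg_left ?_ hβ.le)
        rw [Nat.choose_one_right]
        exact_mod_cast Nat.sub_le _ _
    _ = 2 ^ #T * β * #V := by rw [sum_const, card_powerset, nsmul_eq_mul]; push_cast; ring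
    _ ≤ 2 ^ k * β * #V := mul_le_mul_of_nonneg_right (mul_le_mul_of_nonneg_right
        (pow_le_pow_right₀ one_le_two (by omega)) hβ.le) (Nat.cast_nonneg _)
    _ < a * ((#V : ℝ) - j + 1) := by
        nlinarith [mul_le_mul_of_nonneg_right h2k (Nat.cast_nonneg (α := ℝ) #V)]

theorem perturbedDegLB_lightEdges (hE : ∀ e ∈ E, e ⊆ V ∧ #e = k) (hIE : I ⊆ E)
    (hdk : d ≤ k) (hkV : 2 * k ≤ #V)
    (hdeg : ∀ S ⊆ V, #S = d →
      δ * (((#V - d).choose (k - d) : ℕ) : ℝ) ≤ (#{e ∈ E | S ⊆ e} : ℝ))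
    (ha : 0 < a) (ha1 : a ≤ 1) (haδ : a < δ) (hβ : 0 < β)
    (hβa : 2 * (k + 1) * 8 ^ k * β ≤ a)
    (hIε : (#I : ℝ) ≤ ε * (((#V).choose k : ℕ) : ℝ)) (hε : 0 ≤ ε)
    (hεa : 2 ^ (k + 1) * ε ≤ a * β ^ (d + 1)) :
    PerturbedDegLB k d a (δ - a) V (lightEdges E I #V k d β) := by
  have hI : ∀ e ∈ I, e ⊆ V ∧ #e = k := fun e he => hE e (hIE he)
  have h8 : (2 : ℝ) ^ k ≤ 8 ^ k := pow_le_pow_left₀ zero_le_two (by norm_num) k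
  have h2 : (1 : ℝ) ≤ 2 ^ k := one_le_pow₀ one_le_two
  have hk : (0 : ℝ) ≤ k * 8 ^ k := by positivity
  have hK₁ : (1 + k * 8 ^ k : ℝ) ≤ 2 * (k + 1) * 8 ^ k := by nlinarith
  have hK₂ : (2 : ℝ) ^ (k + 1) ≤ 2 * (k + 1) * 8 ^ k := by rw [pow_succ]; nlinarith
  have hβa₁ := (mul_le_mul_of_nonneg_right hK₁ hβ.le).trans hβa
  have hβa₂ := (mul_le_mul_of_nonneg_right hK₂ hβ.le).trans hβa
  have hβ1 : β ≤ 1 := by nlinarith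
  have hε₂ : 2 ^ k * ε ≤ a * β ^ (d + 1) :=
    (mul_le_mul_of_nonneg_right (pow_le_pow_right₀ one_le_two k.le_succ) hε).trans hεa
  have hε₁ : ε < β ^ (d + 1) := by
    have hpos := pow_pos hβ (d + 1)
    have haβ := mul_le_of_le_one_left hpos.le ha1
    rw [pow_succ] at hεa
    nlinarith
  have hempty := isLight_empty (by omega) hIε hε₁
  intro j hj1 hjd
  have hmem : ∀ S ⊆ V, #S = j → (∀ T ⊆ S, IsLight I #V k d β T) →
      S ∈ shadow j (lightEdges E I #V k d β) := fun S hSV hSj hS =>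
    hSj ▸ mem_shadow_lightEdges hE hIE hdk hkV hdeg hβ hβ1 hβa₁ haδ hSV (by omega) hS
  refine ⟨fun S hS => ?_, card_notMem_shadow_le hI hβ hβ1 (by omega) hIε hε hε₂ (by omega) hmem,
    fun T hT => ?_⟩
  · obtain ⟨e, he, hSe, rfl⟩ := mem_shadow_iff.1 hS
    exact degree_lightEdges_ge hE hIE hdk hkV hdeg hβ hβ1 hβa₁
      (hSe.trans (hE e (lightEdges_subset he)).1) hjd
      fun T hT => isLight_of_mem_lightEdges he (hT.trans hSe) ((card_le_card hT).trans hjd)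
  · obtain ⟨hTj, hTlight⟩ : #T + 1 = j ∧ ∀ U ⊆ T, IsLight I #V k d β U := by
      rcases hT with hT | ⟨rfl, rfl⟩
      · obtain ⟨e, he, hTe, hTj⟩ := mem_shadow_iff.1 hT
        exact ⟨by omega, fun U hU =>
          isLight_of_mem_lightEdges he (hU.trans hTe) (by have := card_le_card hU; omega)⟩
      · exact ⟨rfl, fun U hU => subset_empty.1 hU ▸ hempty⟩
    exact card_supersets_notMem_shadow_lt hI hβ hβ1 hkV ha hβa₂ hdk hjd hmem hTj hTlight

end Light

theorem perturbed_degree_lemma_general (k d : ℕ) (hdk : d ≤ k - 1)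
    (δ : ℝ) (hδ : 0 < δ) :
    ∃ α₀ : ℝ, 0 < α₀ ∧ ∀ a : ℝ, 0 < a → a ≤ α₀ →
      ∃ ε₀ : ℝ, 0 < ε₀ ∧ ∀ ε : ℝ, 0 < ε → ε ≤ ε₀ →
        ∃ t₀ : ℕ, ∀ t : ℕ, t₀ ≤ t →
          ∀ (B : Type) [DecidableEq B], ∀ (V : Finset B) (E I : Finset (Finset B)),
            V.card = t → (∀ e ∈ E, e ⊆ V ∧ e.card = k) →
            (∀ S ⊆ V, S.card = d →
              δ * (((t - d).choose (k - d) : ℕ) : ℝ)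
                ≤ ((E.filter fun e => S ⊆ e).card : ℝ)) →
            I ⊆ E → (I.card : ℝ) ≤ ε * ((t.choose k : ℕ) : ℝ) →
            ∃ E' : Finset (Finset B), E' ⊆ E ∧ (∀ e ∈ E', e ∉ I) ∧
              PerturbedDegLB k d a (δ - a) V E' := by
  refine ⟨min (δ / 2) 1, by positivity, fun a ha haα => ?_⟩
  have haδ : a < δ := by linarith [haα.trans (min_le_left _ _)]
  set β := a / (2 * (k + 1) * 8 ^ k)
  have hβ : 0 < β := by positivity
  have hβa : 2 * (k + 1) * 8 ^ k * β = a := mul_div_cancel₀ a (by positivity)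
  refine ⟨a * β ^ (d + 1) / 2 ^ (k + 1), by positivity, fun ε hε hεε =>
    ⟨2 * k, fun t ht B _ V E I hV hE hdeg hIE hIε => ?_⟩⟩
  subst hV
  refine ⟨lightEdges E I #V k d β, lightEdges_subset, fun _ => notMem_of_mem_lightEdges,
    perturbedDegLB_lightEdges hE hIE (by omega) ht hdeg ha (haα.trans (min_le_right _ _)) haδ hβ
      hβa.le hIε hε.le ?_⟩
  rwa [le_div_iff₀ (by positivity), mul_comm] at hεε

/-- Perturbed degree lemma. -/
theorem perturbed_degree_lemma (k d : ℕ) (hk : 2 ≤ k) (hd : 1 ≤ d) (hdk : d ≤ k - 1)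
    (δ : ℝ) (hδ : 0 < δ) :
    ∃ α₀ : ℝ, 0 < α₀ ∧ ∀ a : ℝ, 0 < a → a ≤ α₀ →
      ∃ ε₀ : ℝ, 0 < ε₀ ∧ ∀ ε : ℝ, 0 < ε → ε ≤ ε₀ →
        ∃ t₀ : ℕ, ∀ t : ℕ, t₀ ≤ t →
          ∀ (B : Type) [DecidableEq B], ∀ (V : Finset B) (E I : Finset (Finset B)),
            V.card = t → (∀ e ∈ E, e ⊆ V ∧ e.card = k) →
            (∀ S ⊆ V, S.card = d →
              δ * (((t - d).choose (k - d) : ℕ) : ℝ)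
                ≤ ((E.filter fun e => S ⊆ e).card : ℝ)) →
            I ⊆ E → (I.card : ℝ) ≤ ε * ((t.choose k : ℕ) : ℝ) →
            ∃ E' : Finset (Finset B), E' ⊆ E ∧ (∀ e ∈ E', e ∉ I) ∧
              PerturbedDegLB k d a (δ - a) V E' :=
  perturbed_degree_lemma_general k d hdk δ hδ
end

section
/- (Lifting b-fractional matchings from vertex links.) Let k ≥ 2, let H be a k-graph and let b : V(H) → [0,1] be a vertex weighting. Suppose there exists a real m with m ≤ (Σ_{v ∈ V(H)} b(v))/k such that for every vertex v of H, the link graph L({v}) has a b-fractional matching of size at least m. Then H itself has a b-fractional matching of size at least m. -/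
open Finset

variable {A : Type*} [DecidableEq A]

/-!
Take a `b`-fractional matching `w` of `E` of maximum size `S`. If every vertex is saturated,
double counting gives `∑ b ≤ k S`, so `S ≥ m`. Otherwise some vertex `v` has slack. Lifting a
link matching of `v` (putting the weight of `f` on `f ∪ {v}`) gives a weighting that respects
every vertex constraint except possibly the one at `v`, and has size at least `m`. Since the
constraint at `v` is inactive at `w`, the maximum `w` is a local, hence (by convexity) a global,
maximum even without that constraint, so `m ≤ S`.
-/

section

variable {V : Finset A} {E : Finset (Finset A)} {b : A → ℝ}

def IsBFracMatching (V : Finset A) (E : Finset (Finset A)) (b : A → ℝ) (w : Finset A → ℝ) :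
    Prop :=
  (∀ e ∈ E, 0 ≤ w e ∧ w e ≤ 1) ∧ ∀ v ∈ V, ∑ e ∈ E with v ∈ e, w e ≤ b v

theorem convex_setOf_isBFracMatching : Convex ℝ {w | IsBFracMatching V E b w} := by
  rintro x ⟨hx, hxV⟩ y ⟨hy, hyV⟩ s t hs ht hst
  refine ⟨fun e he => ?_, fun v hv => ?_⟩
  · obtain ⟨hx0, hx1⟩ := hx e he
    obtain ⟨hy0, hy1⟩ := hy e he
    simp only [Pi.add_apply, Pi.smul_apply, smul_eq_mul]
    constructor <;> nlinarith
  · calc ∑ e ∈ E with v ∈ e, (s • x + t • y) e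
        = s * ∑ e ∈ E with v ∈ e, x e + t * ∑ e ∈ E with v ∈ e, y e := by
          simp only [Pi.add_apply, Pi.smul_apply, smul_eq_mul, sum_add_distrib, mul_sum]
      _ ≤ s * b v + t * b v := by gcongr <;> simp_all
      _ = b v := by rw [← add_mul, hst, one_mul]

theorem isClosed_setOf_isBFracMatching : IsClosed {w | IsBFracMatching V E b w} := by
  have hset : {w | IsBFracMatching V E b w} =
      (⋂ e ∈ E, {w : Finset A → ℝ | w e ∈ Set.Icc 0 1}) ∩
        ⋂ v ∈ V, {w | ∑ e ∈ E with v ∈ e, w e ≤ b v} := by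
    ext w
    simp [IsBFracMatching]
  rw [hset]
  exact (isClosed_biInter fun e _ => isClosed_Icc.preimage (continuous_apply e)).inter
    (isClosed_biInter fun v _ => isClosed_le (by fun_prop) continuous_const)

theorem exists_isMaxOn_isBFracMatching (hb : ∀ v ∈ V, 0 ≤ b v) :
    ∃ w, IsBFracMatching V E b w ∧
      IsMaxOn (fun w => ∑ e ∈ E, w e) {w | IsBFracMatching V E b w} w := by
  set K := {w | IsBFracMatching V E b w} ∩ Set.univ.pi fun _ => Set.Icc (0 : ℝ) 1
  have hK : IsCompact K :=
    (isCompact_univ_pi fun _ => isCompact_Icc).inter_left isClosed_setOf_isBFracMatching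
  have h0 : (0 : Finset A → ℝ) ∈ K :=
    ⟨⟨fun _ _ => by simp, fun v hv => by simpa using hb v hv⟩,
      fun _ _ => ⟨le_rfl, zero_le_one⟩⟩
  have hcont : Continuous fun w : Finset A → ℝ => ∑ e ∈ E, w e := by fun_prop
  obtain ⟨w, ⟨hw, -⟩, hmax⟩ := hK.exists_isMaxOn ⟨0, h0⟩ hcont.continuousOn
  refine ⟨w, hw, fun w' ⟨hw', hw'V⟩ => ?_⟩
  -- Off `E` the weights are unconstrained, so truncate them to land in the compact box.
  have hsum : ∀ s ⊆ E, ∑ e ∈ s, E.piecewise w' 0 e = ∑ e ∈ s, w' e :=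
    fun s hs => sum_congr rfl fun e he => piecewise_eq_of_mem _ _ _ (hs he)
  have htrunc : E.piecewise w' 0 ∈ K := by
    refine ⟨⟨fun e he => ?_, fun v hv => ?_⟩, fun e _ => ?_⟩
    · rw [piecewise_eq_of_mem _ _ _ he]; exact hw' e he
    · rw [hsum _ (filter_subset _ _)]; exact hw'V v hv
    · by_cases he : e ∈ E
      · rw [piecewise_eq_of_mem _ _ _ he]; exact hw' e he
      · simp [piecewise_eq_of_notMem _ _ _ he]
  simpa only [Set.mem_ofPred_eq, hsum E subset_rfl] using hmax htrunc

theorem sum_sum_filter_mem_eq_mul_sum {k : ℕ} (hE : ∀ e ∈ E, e ⊆ V ∧ e.card = k)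
    (w : Finset A → ℝ) : ∑ v ∈ V, ∑ e ∈ E with v ∈ e, w e = k * ∑ e ∈ E, w e := by
  rw [sum_comm' (t' := E) (s' := id) fun v e => by
    simp only [mem_filter, id]
    exact ⟨fun ⟨_, he, hve⟩ => ⟨hve, he⟩,
      fun ⟨hve, he⟩ => ⟨(hE e he).1 hve, he, hve⟩⟩]
  simp only [id, sum_const, nsmul_eq_mul, mul_sum]
  exact sum_congr rfl fun e he => by rw [(hE e he).2]

theorem isMaxOn_erase_of_lt {w : Finset A → ℝ} {v : A} (hw : IsBFracMatching V E b w)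
    (hmax : IsMaxOn (fun w => ∑ e ∈ E, w e) {w | IsBFracMatching V E b w} w)
    (hslack : ∑ e ∈ E with v ∈ e, w e < b v) :
    IsMaxOn (fun w => ∑ e ∈ E, w e) {w | IsBFracMatching (V.erase v) E b w} w := by
  have hconcave :
      ConcaveOn ℝ {w | IsBFracMatching (V.erase v) E b w} fun w => ∑ e ∈ E, w e :=
    ⟨convex_setOf_isBFracMatching, fun x _ y _ s t _ _ _ => by
      simp only [Pi.add_apply, Pi.smul_apply, smul_eq_mul, sum_add_distrib, mul_sum, le_refl]⟩
  refine IsMaxOn.of_isLocalMaxOn_of_concaveOn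
    ⟨hw.1, fun u hu => hw.2 u (mem_of_mem_erase hu)⟩ ?_ hconcave
  have hopen : IsOpen {w' : Finset A → ℝ | ∑ e ∈ E with v ∈ e, w' e < b v} :=
    isOpen_lt (by fun_prop) continuous_const
  filter_upwards [nhdsWithin_le_nhds (hopen.mem_nhds hslack), self_mem_nhdsWithin]
    with w' hw'v ⟨hw', hw'V⟩
  refine hmax ⟨hw', fun u hu => ?_⟩
  by_cases huv : u = v
  · exact huv ▸ hw'v.le
  · exact hw'V u (mem_erase.2 ⟨huv, hu⟩)

def liftLink (v : A) (w : Finset A → ℝ) (e : Finset A) : ℝ :=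
  if v ∈ e then w (e \ {v}) else 0

theorem sum_filter_liftLink (v : A) (w : Finset A → ℝ) (p : Finset A → Prop)
    [DecidablePred p] :
    ∑ e ∈ E with p e, liftLink v w e = ∑ f ∈ link {v} E with p (insert v f), w f := by
  have hinsert : ∀ e : Finset A, v ∈ e → insert v (e \ {v}) = e := fun e he => by
    rw [sdiff_singleton_eq_erase, insert_erase he]
  rw [link, filter_image, sum_image]
  · rw [sum_filter, sum_filter, sum_filter]
    refine sum_congr rfl fun e _ => ?_
    by_cases he : v ∈ e <;> simp [liftLink, he, hinsert]
  · intro e₁ he₁ e₂ he₂ h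
    simp only [coe_filter, Set.mem_ofPred_eq, mem_filter, singleton_subset_iff] at he₁ he₂
    rw [← hinsert e₁ he₁.1.2, ← hinsert e₂ he₂.1.2, show e₁ \ {v} = e₂ \ {v} from h]

theorem IsBFracMatching.liftLink {v : A} {w : Finset A → ℝ}
    (hw : IsBFracMatching V (link {v} E) b w) :
    IsBFracMatching (V.erase v) E b (liftLink v w) := by
  refine ⟨fun e he => ?_, fun u hu => ?_⟩
  · unfold _root_.liftLink
    split_ifs with hve
    · exact hw.1 _ (mem_image_of_mem _ (mem_filter.2 ⟨he, singleton_subset_iff.2 hve⟩))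
    · simp
  · obtain ⟨huv, huV⟩ := mem_erase.1 hu
    simpa [sum_filter_liftLink, huv] using hw.2 u huV

theorem sum_liftLink (v : A) (w : Finset A → ℝ) :
    ∑ e ∈ E, liftLink v w e = ∑ f ∈ link {v} E, w f := by
  simpa using sum_filter_liftLink (E := E) v w fun _ => True

end

theorem lift_b_fractional_matching_general {B : Type*} [DecidableEq B] (k : ℕ)
    (V : Finset B) (E : Finset (Finset B)) (hE : ∀ e ∈ E, e ⊆ V ∧ e.card = k)
    (b : B → ℝ) (hb : ∀ v ∈ V, 0 ≤ b v ∧ b v ≤ 1) (m : ℝ)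
    (hm : m ≤ (∑ v ∈ V, b v) / (k : ℝ))
    (hlink : ∀ v ∈ V, HasBFracMatching V (link {v} E) b m) :
    HasBFracMatching V E b m := by
  obtain ⟨w, hw, hmax⟩ := exists_isMaxOn_isBFracMatching fun v hv => (hb v hv).1
  refine ⟨w, hw.1, hw.2, ?_⟩
  by_cases hsat : ∀ v ∈ V, b v ≤ ∑ e ∈ E with v ∈ e, w e
  · have hsize : 0 ≤ ∑ e ∈ E, w e := sum_nonneg fun e he => (hw.1 e he).1
    refine hm.trans (div_le_of_le_mul₀ k.cast_nonneg hsize ?_)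
    rw [mul_comm, ← sum_sum_filter_mem_eq_mul_sum hE]
    exact sum_le_sum hsat
  · push Not at hsat
    obtain ⟨v, hv, hslack⟩ := hsat
    obtain ⟨w', hw'E, hw'V, hw'm⟩ := hlink v hv
    calc m ≤ ∑ f ∈ link {v} E, w' f := hw'm
      _ = ∑ e ∈ E, liftLink v w' e := (sum_liftLink v w').symm
      _ ≤ ∑ e ∈ E, w e :=
        isMaxOn_erase_of_lt hw hmax hslack (IsBFracMatching.liftLink ⟨hw'E, hw'V⟩)

/-- lifting `b`-fractional matchings from vertex links. -/
theorem lift_b_fractional_matching {B : Type*} [DecidableEq B] (k : ℕ) (hk : 2 ≤ k)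
    (V : Finset B) (E : Finset (Finset B)) (hE : ∀ e ∈ E, e ⊆ V ∧ e.card = k)
    (b : B → ℝ) (hb : ∀ v ∈ V, 0 ≤ b v ∧ b v ≤ 1) (m : ℝ)
    (hm : m ≤ (∑ v ∈ V, b v) / (k : ℝ))
    (hlink : ∀ v ∈ V, HasBFracMatching V (link {v} E) b m) :
    HasBFracMatching V E b m :=
  lift_b_fractional_matching_general k V E hE b hb m hm hlink
end

section
/- (Dense tight component.) Let ℓ ≥ 2 and let L be an ℓ-graph with at least one edge. Then L has a tight component C satisfying e_ℓ(C)·e_{ℓ−1}(L) ≥ e_ℓ(L)·e_{ℓ−1}(C); in particular, if δ, ν and ν' denote the edge densities of L, C and ∂(C) respectively (all on the vertex set of L), then ν ≥ δ·ν'. -/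
open Finset

variable {A : Type*} [DecidableEq A]

/-!
Call two edges adjacent when they share `k - 1` vertices. The classes of the equivalence relation
this generates are exactly the tight components: consecutive windows of a tight walk are adjacent,
and conversely a walk ending on an edge `f` can be continued, through the rotations of its last
`k` vertices, to end on any edge adjacent to `f`. A `(k - 1)`-set lying under edges of two
components would make those edges adjacent, so the components partition both `E` and its
`(k - 1)`-shadow. By the mediant inequality the component maximising `|C| / |∂C|` is then at
least as dense as `E`.
-/

open Relation

theorem Finset.exists_sum_mul_le_mul_sum {ι : Type*} (s : Finset ι) (hs : s.Nonempty)
    (a b : ι → ℕ) (hb : ∀ i ∈ s, 0 < b i) :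
    ∃ i ∈ s, (∑ j ∈ s, a j) * b i ≤ a i * ∑ j ∈ s, b j := by
  obtain ⟨i, hi, hmax⟩ := s.exists_max_image (fun j => (a j : ℚ) / b j) hs
  refine ⟨i, hi, ?_⟩
  rw [sum_mul, mul_sum]
  refine sum_le_sum fun j hj => ?_
  have hratio := hmax j hj
  rw [div_le_div_iff₀ (by exact_mod_cast hb j hj) (by exact_mod_cast hb i hi)] at hratio
  exact_mod_cast hratio

section Shadows

variable {j : ℕ} {E : Finset (Finset A)}

theorem mem_shadow_iff_exists_subset {S : Finset A} :
    S ∈ shadow j E ↔ ∃ e ∈ E, S ⊆ e ∧ #S = j := by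
  simp [_root_.shadow]

theorem shadow_biUnion {ι : Type*} (s : Finset ι) (t : ι → Finset (Finset A)) :
    shadow j (s.biUnion t) = s.biUnion fun i => shadow j (t i) :=
  biUnion_biUnion _ _ _

theorem card_shadow_le_choose {V : Finset A} (hE : ∀ e ∈ E, e ⊆ V) :
    #(shadow j E) ≤ (#V).choose j := by
  rw [← card_powersetCard]
  refine card_le_card fun S hS => ?_
  obtain ⟨e, he, hSe, hS⟩ := mem_shadow_iff_exists_subset.1 hS
  exact mem_powersetCard.2 ⟨hSe.trans (hE e he), hS⟩

end Shadows

section Walks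

variable {k : ℕ} {D E : Finset (Finset A)} {w : List A}

theorem card_walkEdgeAt_le_card_inter_add_one (k : ℕ) (w : List A) (i : ℕ) :
    #(walkEdgeAt k w i) ≤ #(walkEdgeAt k w i ∩ walkEdgeAt k w (i + 1)) + 1 := by
  unfold walkEdgeAt
  rcases k with _ | k
  · simp
  rcases h : w.drop i with _ | ⟨x, t⟩
  · simp
  have hnext : w.drop (i + 1) = t := by rw [← List.drop_drop, h, List.drop_one, List.tail_cons]
  rw [hnext]
  refine (card_le_card fun y hy => ?_).trans (card_insert_le x _)
  simp only [List.take_succ_cons, List.toFinset_cons, mem_insert, List.mem_toFinset,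
    mem_inter] at hy ⊢
  rcases hy with rfl | hy
  · exact Or.inl rfl
  · exact Or.inr ⟨Or.inr hy, (List.take_prefix_take_left (by omega)).subset hy⟩

theorem walkEdgeAt_append_append {u v : List A} (r : List A) (hv : v.length = k) :
    walkEdgeAt k (u ++ v ++ r) u.length = v.toFinset := by
  simp [walkEdgeAt, ← hv]

theorem walkEdgeAt_append_of_le (r : List A) {i : ℕ} (hi : i + k ≤ w.length) :
    walkEdgeAt k (w ++ r) i = walkEdgeAt k w i := by
  unfold walkEdgeAt
  rw [List.drop_append_of_le_length (by omega), List.take_append_of_le_length (by simp; omega)]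

theorem IsTightWalk.mono (hDE : D ⊆ E) (hw : IsTightWalk k D w) : IsTightWalk k E w :=
  ⟨hw.1, fun i hi => hDE (hw.2 i hi)⟩

theorem walkEdgeAt_toList_zero {e : Finset A} (hk : #e = k) : walkEdgeAt k e.toList 0 = e := by
  rw [walkEdgeAt, List.drop_zero, List.take_of_length_le (by simp [hk]), toList_toFinset]

theorem isTightWalk_toList {e : Finset A} (he : e ∈ E) (hk : #e = k) :
    IsTightWalk k E e.toList := by
  refine ⟨by simp [hk], fun i hi => ?_⟩
  obtain rfl : i = 0 := by simp [hk] at hi; omega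
  rwa [walkEdgeAt_toList_zero hk]

end Walks

section Adjacency

variable {k : ℕ} {D E : Finset (Finset A)} {w : List A}

def TightAdj (k : ℕ) (E : Finset (Finset A)) (e f : Finset A) : Prop :=
  e ∈ E ∧ f ∈ E ∧ k - 1 ≤ #(e ∩ f)

instance : Std.Symm (TightAdj k E) where
  symm _ _ := fun ⟨he, hf, h⟩ => ⟨hf, he, by rwa [inter_comm]⟩

theorem tightAdj_walkEdgeAt_succ (hE : ∀ e ∈ E, #e = k) (hw : IsTightWalk k E w) {i : ℕ}
    (hi : i + 1 + k ≤ w.length) :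
    TightAdj k E (walkEdgeAt k w i) (walkEdgeAt k w (i + 1)) := by
  have hmem := hw.2 i (by omega)
  refine ⟨hmem, hw.2 (i + 1) hi, ?_⟩
  have := card_walkEdgeAt_le_card_inter_add_one k w i
  rw [hE _ hmem] at this
  omega

theorem reflTransGen_walkEdgeAt (hE : ∀ e ∈ E, #e = k) (hw : IsTightWalk k E w) {i j : ℕ}
    (hi : i + k ≤ w.length) (hj : j + k ≤ w.length) :
    ReflTransGen (TightAdj k E) (walkEdgeAt k w i) (walkEdgeAt k w j) := by
  wlog hij : i ≤ j generalizing i j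
  · exact symm (this hj hi (by omega))
  exact ReflTransGen.lift (walkEdgeAt k w) (fun _ _ h => h) i j <|
    reflTransGen_of_succ_of_le _ (fun n hn => tightAdj_walkEdgeAt_succ hE hw <| by
      simp only [Set.mem_Ico] at hn; omega) hij

theorem TightlyConnected.reflTransGen (hE : ∀ e ∈ E, #e = k) (hDE : D ⊆ E)
    (hD : TightlyConnected k D) {e f : Finset A} (he : e ∈ D) (hf : f ∈ D) :
    ReflTransGen (TightAdj k E) e f := by
  obtain ⟨w, hw, ⟨i, hi, rfl⟩, ⟨j, hj, rfl⟩⟩ := hD e he f hf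
  exact reflTransGen_walkEdgeAt hE (hw.mono hDE) hi hj

theorem exists_mem_eq_insert_erase {f g : Finset A} (hk : 1 ≤ k) (hf : #f = k) (hg : #g = k)
    (hfg : k - 1 ≤ #(f ∩ g)) : ∃ b ∈ f, ∃ c, g = insert c (f.erase b) := by
  by_cases hsub : f ⊆ g
  · obtain ⟨b, hb⟩ : f.Nonempty := card_pos.1 (by omega)
    exact ⟨b, hb, b, by rw [insert_erase hb, eq_of_subset_of_card_le hsub (by omega)]⟩
  obtain ⟨b, hbf, hbg⟩ := not_subset.1 hsub
  have herase : f.erase b ⊆ g := by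
    have hinter : f ∩ g = f.erase b :=
      eq_of_subset_of_card_le (fun x hx => mem_erase.2 ⟨by rintro rfl; exact hbg (mem_inter.1 hx).2,
        (mem_inter.1 hx).1⟩) (by rw [card_erase_of_mem hbf]; omega)
    exact hinter ▸ inter_subset_right
  obtain ⟨c, -, hc⟩ := exists_eq_insert_iff.2 ⟨herase, by rw [card_erase_of_mem hbf]; omega⟩
  exact ⟨b, hbf, c, hc.symm⟩

end Adjacency

section Extension

variable {k : ℕ} {D : Finset (Finset A)}

/-- Writing `τ = α ++ b :: β`, appending `α ++ [c]` walks through the rotations of `τ` and ends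
on `β ++ α ++ [c]`, whose vertex set is `insert c (τ.toFinset.erase b)`. -/
theorem IsTightWalk.exists_extend {u τ : List A} {b c : A} (hw : IsTightWalk k D (u ++ τ))
    (hτ : τ.Nodup) (hlen : τ.length = k) (hb : b ∈ τ) (hg : insert c (τ.toFinset.erase b) ∈ D) :
    ∃ u' τ', u ++ τ <+: u' ++ τ' ∧ IsTightWalk k D (u' ++ τ') ∧ τ'.length = k ∧
      τ'.toFinset = insert c (τ.toFinset.erase b) := by
  obtain ⟨α, β, rfl⟩ := List.append_of_mem hb
  have hspan : (β ++ α ++ [c]).toFinset = insert c ((α ++ b :: β).toFinset.erase b) := by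
    have hb' : b ∉ α ++ β := (List.nodup_cons.1 (List.nodup_middle.1 hτ)).1
    ext x
    simp only [List.mem_append, not_or] at hb'
    simp only [List.toFinset_append, List.toFinset_cons, List.toFinset_nil, mem_union, mem_insert,
      mem_erase, List.mem_toFinset]
    grind
  have hf := hw.2 u.length (by simp [hlen])
  rw [← List.append_nil (u ++ _), walkEdgeAt_append_append [] hlen] at hf
  simp only [List.length_append, List.length_cons] at hlen
  refine ⟨u ++ α ++ [b], β ++ α ++ [c], ⟨α ++ [c], by simp⟩,
    ⟨by simp; omega, fun i hi => ?_⟩, by simp; omega, hspan⟩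
  simp only [List.length_append, List.length_cons, List.length_nil] at hi
  rcases lt_or_ge i u.length with hiu | hiu
  · rw [show u ++ α ++ [b] ++ (β ++ α ++ [c]) = u ++ (α ++ b :: β) ++ (α ++ [c]) by simp,
      walkEdgeAt_append_of_le _ (by simp; omega)]
    exact hw.2 i (by simp; omega)
  obtain ⟨j, rfl⟩ := Nat.exists_eq_add_of_le hiu
  rcases le_or_gt j α.length with hj | hj
  · have hrot : (α.drop j ++ b :: β ++ α.take j).toFinset = (α ++ b :: β).toFinset := by
      ext x
      conv_rhs => rw [← List.take_append_drop j α]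
      simp only [List.mem_toFinset, List.mem_append]
      tauto
    rw [show u ++ α ++ [b] ++ (β ++ α ++ [c])
        = u ++ α.take j ++ (α.drop j ++ b :: β ++ α.take j) ++ (α.drop j ++ [c]) by
          conv_lhs => rw [← List.take_append_drop j α]
          simp only [List.append_assoc, List.cons_append, List.nil_append],
      show u.length + j = (u ++ α.take j).length by simp; omega,
      walkEdgeAt_append_append _ (by simp; omega), hrot]
    exact hf
  · obtain rfl : j = α.length + 1 := by omega
    rw [← List.append_nil (_ ++ (β ++ α ++ [c])),
      show u.length + (α.length + 1) = (u ++ α ++ [b]).length by simp,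
      walkEdgeAt_append_append [] (by simp; omega), hspan]
    exact hg

end Extension

section Components

variable {k : ℕ} {E : Finset (Finset A)} {e f : Finset A}

open scoped Classical in
noncomputable def tightComponentOf (k : ℕ) (E : Finset (Finset A)) (e : Finset A) :
    Finset (Finset A) :=
  E.filter (ReflTransGen (TightAdj k E) e)

theorem mem_tightComponentOf :
    f ∈ tightComponentOf k E e ↔ f ∈ E ∧ ReflTransGen (TightAdj k E) e f := by
  classical exact mem_filter

theorem tightComponentOf_eq_of_reflTransGen (h : ReflTransGen (TightAdj k E) e f) :
    tightComponentOf k E f = tightComponentOf k E e := by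
  ext g
  simp only [mem_tightComponentOf]
  exact and_congr_right fun _ => ⟨h.trans, (symm h).trans⟩

theorem exists_tightWalk_of_reflTransGen (hk : 1 ≤ k) (hE : ∀ e ∈ E, #e = k) (he : e ∈ E)
    (h : ReflTransGen (TightAdj k E) e f) :
    ∃ u τ, IsTightWalk k (tightComponentOf k E e) (u ++ τ) ∧ walkEdgeAt k (u ++ τ) 0 = e ∧
      τ.length = k ∧ τ.toFinset = f := by
  induction h with
  | refl =>
    refine ⟨[], e.toList, isTightWalk_toList (mem_tightComponentOf.2 ⟨he, .refl⟩) (hE e he),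
      walkEdgeAt_toList_zero (hE e he), by simp [hE e he], toList_toFinset e⟩
  | tail hef hfg ih =>
    obtain ⟨u, τ, hw, hfirst, hlen, rfl⟩ := ih
    obtain ⟨hfE, hgE, hinter⟩ := hfg
    have hτ : τ.Nodup := Multiset.toFinset_card_eq_card_iff_nodup (m := (τ : Multiset A)).1 <| by
      rw [Multiset.coe_card]; exact (hE _ hfE).trans hlen.symm
    obtain ⟨b, hb, c, rfl⟩ := exists_mem_eq_insert_erase hk (hE _ hfE) (hE _ hgE) hinter
    obtain ⟨u', τ', hpre, hw', hlen', hτ'⟩ := hw.exists_extend hτ hlen (List.mem_toFinset.1 hb)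
      (mem_tightComponentOf.2 ⟨hgE, hef.tail ⟨hfE, hgE, hinter⟩⟩)
    obtain ⟨r, hr⟩ := hpre
    refine ⟨u', τ', hw', ?_, hlen', hτ'⟩
    rw [← hr, walkEdgeAt_append_of_le _ (by simp [hlen]), hfirst]

theorem isTightComponent_tightComponentOf (hk : 1 ≤ k) (hE : ∀ e ∈ E, #e = k) (he : e ∈ E) :
    IsTightComponent k E (tightComponentOf k E e) := by
  refine ⟨fun g hg => (mem_tightComponentOf.1 hg).1, fun e₁ he₁ e₂ he₂ => ?_,
    fun C hC hCE hCconn => ?_⟩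
  · obtain ⟨he₁E, h₁⟩ := mem_tightComponentOf.1 he₁
    obtain ⟨-, h₂⟩ := mem_tightComponentOf.1 he₂
    obtain ⟨u, τ, hw, hfirst, hlen, hlast⟩ :=
      exists_tightWalk_of_reflTransGen hk hE he₁E ((symm h₁).trans h₂)
    rw [tightComponentOf_eq_of_reflTransGen h₁] at hw
    refine ⟨u ++ τ, hw, ⟨0, by simpa using hw.1, hfirst⟩, ⟨u.length, by simp [hlen], ?_⟩⟩
    rw [← List.append_nil (u ++ τ), walkEdgeAt_append_append [] hlen, hlast]
  · have heC : e ∈ C := hC (mem_tightComponentOf.2 ⟨he, .refl⟩)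
    exact Subset.antisymm (fun g hg => mem_tightComponentOf.2
      ⟨hCE hg, hCconn.reflTransGen hE hCE heC hg⟩) hC

end Components

section Counting

variable {k : ℕ} {E : Finset (Finset A)} {e e' : Finset A}

theorem disjoint_tightComponentOf (h : tightComponentOf k E e ≠ tightComponentOf k E e') :
    Disjoint (tightComponentOf k E e) (tightComponentOf k E e') := by
  refine disjoint_left.2 fun f hf hf' => h ?_
  rw [← tightComponentOf_eq_of_reflTransGen (mem_tightComponentOf.1 hf).2,
    tightComponentOf_eq_of_reflTransGen (mem_tightComponentOf.1 hf').2]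

theorem disjoint_shadow_tightComponentOf (h : tightComponentOf k E e ≠ tightComponentOf k E e') :
    Disjoint (shadow (k - 1) (tightComponentOf k E e))
      (shadow (k - 1) (tightComponentOf k E e')) := by
  refine disjoint_left.2 fun S hS hS' => h ?_
  obtain ⟨f, hf, hSf, hS⟩ := mem_shadow_iff_exists_subset.1 hS
  obtain ⟨f', hf', hSf', -⟩ := mem_shadow_iff_exists_subset.1 hS'
  obtain ⟨hfE, hef⟩ := mem_tightComponentOf.1 hf
  obtain ⟨hf'E, he'f'⟩ := mem_tightComponentOf.1 hf'
  have hadj : TightAdj k E f f' := ⟨hfE, hf'E, hS ▸ card_le_card (subset_inter hSf hSf')⟩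
  rw [← tightComponentOf_eq_of_reflTransGen (hef.tail hadj),
    tightComponentOf_eq_of_reflTransGen he'f']

theorem exists_isTightComponent_card_mul_card_shadow_le (hk : 1 ≤ k) (hE : ∀ e ∈ E, #e = k)
    (hne : E.Nonempty) :
    ∃ C, IsTightComponent k E C ∧ #E * #(shadow (k - 1) C) ≤ #C * #(shadow (k - 1) E) := by
  set comps := E.image (tightComponentOf k E)
  have hcover : comps.biUnion id = E := by
    ext f
    simp only [comps, mem_biUnion, mem_image, id, exists_exists_and_eq_and]
    exact ⟨fun ⟨_, _, hf⟩ => (mem_tightComponentOf.1 hf).1,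
      fun hf => ⟨f, hf, mem_tightComponentOf.2 ⟨hf, .refl⟩⟩⟩
  have hdisj : (comps : Set (Finset (Finset A))).PairwiseDisjoint id := by
    rw [coe_image]
    rintro _ ⟨e, -, rfl⟩ _ ⟨e', -, rfl⟩ hne
    exact disjoint_tightComponentOf hne
  have hdisj_shadow : (comps : Set (Finset (Finset A))).PairwiseDisjoint (shadow (k - 1)) := by
    rw [coe_image]
    rintro _ ⟨e, -, rfl⟩ _ ⟨e', -, rfl⟩ hne
    exact disjoint_shadow_tightComponentOf hne
  have hpos : ∀ C ∈ comps, 0 < #(shadow (k - 1) C) := by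
    simp only [comps, forall_mem_image]
    intro e he
    obtain ⟨S, hSe, hS⟩ := exists_subset_card_eq (show k - 1 ≤ #e by rw [hE e he]; omega)
    exact card_pos.2 ⟨S, mem_shadow_iff_exists_subset.2
      ⟨e, mem_tightComponentOf.2 ⟨he, .refl⟩, hSe, hS⟩⟩
  have hcard : #E = ∑ C ∈ comps, #C := by
    conv_lhs => rw [← hcover]
    exact card_biUnion hdisj
  have hcard_shadow : #(shadow (k - 1) E) = ∑ C ∈ comps, #(shadow (k - 1) C) := by
    conv_lhs => rw [← hcover, shadow_biUnion]
    exact card_biUnion hdisj_shadow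
  obtain ⟨_, hC, hle⟩ := exists_sum_mul_le_mul_sum comps (hne.image _) card _ hpos
  obtain ⟨e, he, rfl⟩ := mem_image.1 hC
  exact ⟨_, isTightComponent_tightComponentOf hk hE he, hcard ▸ hcard_shadow ▸ hle⟩

end Counting

/-- dense tight component. -/
theorem dense_tight_component {B : Type*} [DecidableEq B] (l : ℕ) (hl : 2 ≤ l)
    (V : Finset B) (E : Finset (Finset B)) (hE : ∀ e ∈ E, e ⊆ V ∧ e.card = l)
    (hne : E.Nonempty) :
    ∃ C : Finset (Finset B), IsTightComponent l E C ∧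
      E.card * (shadow (l - 1) C).card ≤ C.card * (shadow (l - 1) E).card ∧
      ((E.card : ℝ) / (V.card.choose l : ℝ)) * (((shadow (l - 1) C).card : ℝ) / (V.card.choose (l - 1) : ℝ))
        ≤ (C.card : ℝ) / (V.card.choose l : ℝ) := by
  obtain ⟨C, hC, hdense⟩ :=
    exists_isTightComponent_card_mul_card_shadow_le (by omega) (fun e he => (hE e he).2) hne
  refine ⟨C, hC, hdense, ?_⟩
  obtain ⟨e, he⟩ := hne
  have hlV : l ≤ #V := (hE e he).2 ▸ card_le_card (hE e he).1
  have hN : (0 : ℝ) < (#V).choose l := by exact_mod_cast Nat.choose_pos hlV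
  have hM : (0 : ℝ) < (#V).choose (l - 1) := by exact_mod_cast Nat.choose_pos (by omega)
  have hcount : (#E : ℝ) * #(shadow (l - 1) C) ≤ #C * (#V).choose (l - 1) := by
    exact_mod_cast hdense.trans
      (Nat.mul_le_mul_left _ (card_shadow_le_choose fun e he => (hE e he).1))
  rw [div_mul_div_comm, div_le_div_iff₀ (mul_pos hN hM) hN]
  calc (#E : ℝ) * #(shadow (l - 1) C) * (#V).choose l
      ≤ #C * (#V).choose (l - 1) * (#V).choose l := by gcongr
    _ = #C * ((#V).choose l * (#V).choose (l - 1)) := by ring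
end

section
/- (Density of ratio-dense subgraphs.) For every integer ℓ ≥ 2 and all reals 0 < δ ≤ 1 and ε > 0 there exists t_0 such that for all t ≥ t_0 the following holds: if L is an ℓ-graph on t vertices with edge density δ, and C is a subgraph of L with at least one edge whose edge density ν and whose shadow ∂(C)'s edge density ν' satisfy ν ≥ δ·ν', then ν ≥ δ^ℓ − ε. -/
open Finset

variable {A : Type*} [DecidableEq A]

/-!
Let `s` be largest with `C(s, l) ≤ |C|`. Kruskal–Katona gives `|∂C| ≥ C(s, l - 1)`, and together
with `|C| < C(s + 1, l)` the ratio condition forces `s + 1 > δ (t - l + 1)`. Hence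
`ν ≥ δ ν' ≥ δ C(s, l - 1) / C(t, l - 1) ≥ δ ((s + 2 - l) / t) ^ (l - 1) ≥ δ (δ - 2 (l - 1) / t) ^ (l - 1)`,
and the last term is at least `δ ^ l - 2 (l - 1) ^ 2 / t`.
-/

open scoped FinsetFamily

lemma shadow_eq_finsetShadow {𝒜 : Finset (Finset A)} {r : ℕ}
    (h𝒜 : (𝒜 : Set (Finset A)).Sized (r + 1)) : _root_.shadow r 𝒜 = ∂ 𝒜 := by
  ext u
  simp only [_root_.shadow, mem_biUnion, mem_powersetCard, mem_shadow_iff_exists_mem_card_add_one]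
  constructor
  · rintro ⟨e, he, hue, rfl⟩
    exact ⟨e, he, hue, h𝒜 he⟩
  · rintro ⟨e, he, hue, he_card⟩
    exact ⟨e, he, hue, by rw [h𝒜 he] at he_card; omega⟩

lemma map_shadow_subset_shadow_map {β : Type*} [DecidableEq β] (f : β ↪ A)
    (𝒜 : Finset (Finset β)) :
    (∂ 𝒜).map (mapEmbedding f).toEmbedding ⊆ ∂ (𝒜.map (mapEmbedding f).toEmbedding) := by
  intro u hu
  obtain ⟨v, hv, rfl⟩ := mem_map.1 hu
  obtain ⟨e, he, a, ha, rfl⟩ := mem_shadow_iff.1 hv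
  refine mem_shadow_iff.2 ⟨e.map f, mem_map_of_mem _ he, f a, mem_map_of_mem f ha, ?_⟩
  simp [map_erase]

/-- Kruskal–Katona in Lovász's form, transported from `Fin n` to subsets of a finset `V`. -/
theorem choose_le_card_shadow {V : Finset A} {𝒜 : Finset (Finset A)} {r k : ℕ}
    (h𝒜V : ∀ e ∈ 𝒜, e ⊆ V) (h𝒜 : (𝒜 : Set (Finset A)).Sized (r + 1))
    (hrk : r + 1 ≤ k) (hkV : k ≤ #V) (hk : k.choose (r + 1) ≤ #𝒜) :
    k.choose r ≤ #(∂ 𝒜) := by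
  let g : Fin #V ↪ A := V.equivFin.symm.toEmbedding.trans (Function.Embedding.subtype (· ∈ V))
  have hg : univ.image g = V := by
    rw [← map_eq_image, ← map_map, map_univ_equiv, univ_eq_attach, attach_map_val]
  let ℬ := univ.filter fun b : Finset (Fin #V) => b.map g ∈ 𝒜
  have hℬ : ℬ.map (mapEmbedding g).toEmbedding = 𝒜 := by
    ext e
    simp only [ℬ, mem_map, mem_filter, mem_univ, true_and, RelEmbedding.coe_toEmbedding,
      mapEmbedding_apply]
    refine ⟨fun ⟨b, hb, hbe⟩ => hbe ▸ hb, fun he => ?_⟩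
    obtain ⟨b, -, hbe⟩ := subset_image_iff.1 (hg ▸ h𝒜V e he)
    rw [← map_eq_image] at hbe
    exact ⟨b, hbe ▸ he, hbe⟩
  have hℬ_sized : (ℬ : Set (Finset (Fin #V))).Sized (r + 1) := fun b hb => by
    simpa using h𝒜 (mem_filter.1 hb).2
  have hℬ_card : #ℬ = #𝒜 := by rw [← hℬ, card_map]
  calc k.choose r = k.choose (r + 1 - 1) := rfl
    _ ≤ #(∂^[1] ℬ) := kruskal_katona_lovasz_form le_add_self hrk hkV hℬ_sized (hℬ_card ▸ hk)
    _ = #((∂ ℬ).map (mapEmbedding g).toEmbedding) := by rw [card_map, Function.iterate_one]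
    _ ≤ #(∂ 𝒜) := hℬ ▸ card_le_card (map_shadow_subset_shadow_map g ℬ)

lemma exists_choose_le_lt_choose_succ {r m t : ℕ} (hm : 0 < m) (hmt : m < (t + 1).choose (r + 1)) :
    ∃ s ≤ t, r + 1 ≤ s ∧ s.choose (r + 1) ≤ m ∧ m < (s + 1).choose (r + 1) := by
  have hex : ∃ n, m < (n + 1).choose (r + 1) := ⟨t, hmt⟩
  refine ⟨Nat.find hex, Nat.find_min' hex hmt, ?_, ?_, Nat.find_spec hex⟩
  · by_contra! h
    have := (Nat.find_spec hex).trans_le (Nat.choose_le_choose (r + 1) h)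
    rw [Nat.choose_self] at this
    omega
  · rcases hs : Nat.find hex with _ | n
    · simp
    · exact not_lt.1 (Nat.find_min hex (hs ▸ n.lt_succ_self))

lemma pow_mul_choose_le_choose_mul_pow (j s t : ℕ) :
    ((s + 1 - j : ℕ) : ℝ) ^ j * t.choose j ≤ s.choose j * (t : ℝ) ^ j := by
  calc ((s + 1 - j : ℕ) : ℝ) ^ j * t.choose j
      ≤ ((s + 1 - j : ℕ) : ℝ) ^ j * ((t : ℝ) ^ j / j.factorial) := by
        gcongr; exact Nat.choose_le_pow_div j t
    _ = ((s + 1 - j : ℕ) : ℝ) ^ j / j.factorial * (t : ℝ) ^ j := by ring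
    _ ≤ s.choose j * (t : ℝ) ^ j := by gcongr; exact Nat.pow_le_choose j s

lemma pow_succ_sub_le_mul_sub_pow {δ c : ℝ} (hc : 0 ≤ c) (hcδ : c ≤ δ) (hδ : δ ≤ 1) (r : ℕ) :
    δ ^ (r + 1) - r * c ≤ δ * (δ - c) ^ r := by
  have hδ0 : 0 ≤ δ := hc.trans hcδ
  have hmax : max |δ| |δ - c| ^ (r - 1) ≤ 1 := by
    refine pow_le_one₀ (le_max_of_le_left (abs_nonneg _)) (max_le ?_ ?_) <;>
      rw [abs_le] <;> constructor <;> linarith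
  have hlip : δ ^ r - (δ - c) ^ r ≤ r * c := by
    have h := abs_pow_sub_pow_le δ (δ - c) r
    rw [sub_sub_cancel, abs_of_nonneg hc] at h
    calc δ ^ r - (δ - c) ^ r ≤ |δ ^ r - (δ - c) ^ r| := le_abs_self _
      _ ≤ c * r * 1 := h.trans (by gcongr)
      _ = r * c := by ring
  have hsub : 0 ≤ r * c - δ * (δ ^ r - (δ - c) ^ r) := by
    nlinarith [pow_le_pow_left₀ (sub_nonneg.2 hcδ) (sub_le_self δ hc) r]
  linear_combination hsub

-- The two ratios are `C(t, r + 1) / C(t, r) = (t - r) / (r + 1)`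
-- and `C(s + 1, r + 1) / C(s, r) = (s + 1) / (r + 1)`.
lemma mul_sub_lt_add_one_of_shadow_ratio {δ m σ : ℝ} {r s t : ℕ} (hrs : r ≤ s) (hrt : r + 1 ≤ t)
    (hσ : s.choose r ≤ σ) (hm : m < (s + 1).choose (r + 1))
    (hratio : δ * (σ / t.choose r) ≤ m / t.choose (r + 1)) :
    δ * (t - r) < s + 1 := by
  have hct : (0 : ℝ) < t.choose r := by exact_mod_cast Nat.choose_pos (by omega)
  have hct' : (0 : ℝ) < t.choose (r + 1) := by exact_mod_cast Nat.choose_pos hrt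
  have hσ0 : (0 : ℝ) < σ := hσ.trans_lt' (by exact_mod_cast Nat.choose_pos hrs)
  have hct_succ : (t.choose (r + 1) : ℝ) * (r + 1) = t.choose r * (t - r) := by
    have h := congrArg (Nat.cast (R := ℝ)) (Nat.choose_succ_right_eq t r)
    push_cast [Nat.cast_sub (by omega : r ≤ t)] at h
    exact h
  have hcs_succ : ((s + 1).choose (r + 1) : ℝ) * (r + 1) = (s + 1) * s.choose r := by
    exact_mod_cast (Nat.add_one_mul_choose_eq s r).symm
  rw [mul_div_assoc', div_le_div_iff₀ hct hct'] at hratio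
  have hσm : δ * σ * (t - r) ≤ m * (r + 1) := by
    refine le_of_mul_le_mul_right ?_ hct
    linear_combination (r + 1 : ℝ) * hratio - δ * σ * hct_succ
  refine lt_of_mul_lt_mul_right ?_ hσ0.le
  calc δ * (t - r) * σ = δ * σ * (t - r) := by ring
    _ < (s + 1).choose (r + 1) * (r + 1) := by nlinarith
    _ ≤ (s + 1) * σ := by rw [hcs_succ]; gcongr

theorem pow_sub_le_density_of_ratio_dense {V : Finset A} {𝒞 : Finset (Finset A)} {r : ℕ}
    {δ ν ν' : ℝ} (h𝒞V : ∀ e ∈ 𝒞, e ⊆ V) (h𝒞 : (𝒞 : Set (Finset A)).Sized (r + 1))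
    (hne : 𝒞.Nonempty) (hδ1 : δ ≤ 1) (hrδ : 2 * r ≤ δ * #V)
    (hν : (#𝒞 : ℝ) = ν * (#V).choose (r + 1)) (hν' : (#(∂ 𝒞) : ℝ) = ν' * (#V).choose r)
    (hratio : δ * ν' ≤ ν) :
    δ ^ (r + 1) - 2 * r ^ 2 / #V ≤ ν := by
  set t := #V
  obtain ⟨e, he⟩ := hne
  have hrt : r + 1 ≤ t := h𝒞 he ▸ card_le_card (h𝒞V e he)
  have ht : (0 : ℝ) < t := by exact_mod_cast (r.succ_pos.trans_le hrt)
  have hct : (0 : ℝ) < t.choose r := by exact_mod_cast Nat.choose_pos (by omega)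
  have hct' : (0 : ℝ) < t.choose (r + 1) := by exact_mod_cast Nat.choose_pos hrt
  rw [eq_div_of_mul_eq hct'.ne' hν.symm, eq_div_of_mul_eq hct.ne' hν'.symm] at hratio
  rw [eq_div_of_mul_eq hct'.ne' hν.symm]
  have hcδ : 2 * r / t ≤ δ := (div_le_iff₀ ht).2 hrδ
  have hm_le : #𝒞 ≤ t.choose (r + 1) := card_powersetCard (r + 1) V ▸
    card_le_card fun e he => mem_powersetCard.2 ⟨h𝒞V e he, h𝒞 he⟩
  have hmt : #𝒞 < (t + 1).choose (r + 1) := by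
    have := Nat.choose_pos (by omega : r ≤ t)
    rw [Nat.choose_succ_succ']
    omega
  obtain ⟨s, hst, hrs, hs_le, hs_lt⟩ := exists_choose_le_lt_choose_succ (card_pos.2 ⟨e, he⟩) hmt
  have hshadow : (s.choose r : ℝ) ≤ #(∂ 𝒞) := by
    exact_mod_cast choose_le_card_shadow h𝒞V h𝒞 hrs hst hs_le
  have hs_large : δ * (t - r) < s + 1 :=
    mul_sub_lt_add_one_of_shadow_ratio (by omega) hrt hshadow (by exact_mod_cast hs_lt) hratio
  have hδc : 0 ≤ δ - 2 * r / t := sub_nonneg.2 hcδ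
  have hδ : 0 ≤ δ := (by positivity : (0 : ℝ) ≤ 2 * r / t).trans hcδ
  have hbase : δ - 2 * r / t ≤ ((s + 1 - r : ℕ) : ℝ) / t := by
    rw [Nat.cast_sub (by omega), le_div_iff₀ ht, sub_mul, div_mul_cancel₀ _ ht.ne']
    push_cast
    nlinarith
  calc δ ^ (r + 1) - 2 * r ^ 2 / t = δ ^ (r + 1) - r * (2 * r / t) := by ring
    _ ≤ δ * (δ - 2 * r / t) ^ r := pow_succ_sub_le_mul_sub_pow (by positivity) hcδ hδ1 r
    _ ≤ δ * (((s + 1 - r : ℕ) : ℝ) / t) ^ r := by gcongr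
    _ ≤ δ * (s.choose r / t.choose r) := by
        gcongr
        rw [div_pow, div_le_div_iff₀ (by positivity) hct]
        exact pow_mul_choose_le_choose_mul_pow r s t
    _ ≤ δ * (#(∂ 𝒞) / t.choose r) := by gcongr
    _ ≤ #𝒞 / t.choose (r + 1) := hratio

/-- density of ratio-dense subgraphs. -/
theorem dense_subgraph_density (l : ℕ) (hl : 2 ≤ l) (δ ε : ℝ) (hδ : 0 < δ) (hδ1 : δ ≤ 1)
    (hε : 0 < ε) :
    ∃ t₀ : ℕ, ∀ t : ℕ, t₀ ≤ t →
      ∀ (B : Type) [DecidableEq B], ∀ (V : Finset B) (E C : Finset (Finset B)),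
        V.card = t → (∀ e ∈ E, e ⊆ V ∧ e.card = l) → C ⊆ E → C.Nonempty →
        (E.card : ℝ) = δ * ((t.choose l : ℕ) : ℝ) →
        ∀ ν ν' : ℝ, (C.card : ℝ) = ν * ((t.choose l : ℕ) : ℝ) →
          ((shadow (l - 1) C).card : ℝ) = ν' * ((t.choose (l - 1) : ℕ) : ℝ) →
          δ * ν' ≤ ν →
          δ ^ l - ε ≤ ν := by
  obtain ⟨r, rfl⟩ : ∃ r, l = r + 1 := ⟨l - 1, by omega⟩
  refine ⟨max ⌈2 * r / δ⌉₊ ⌈2 * r ^ 2 / ε⌉₊,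
    fun t ht B _ V E C hV hE hCE hCne _ ν ν' hν hν' hratio => ?_⟩
  subst hV
  have hC : (C : Set (Finset B)).Sized (r + 1) := fun e he => (hE e (hCE he)).2
  rw [Nat.add_sub_cancel, shadow_eq_finsetShadow hC] at hν'
  have hrδ : 2 * r ≤ δ * #V := by
    linarith [(div_le_iff₀ hδ).1 (Nat.ceil_le.1 (le_of_max_le_left ht))]
  have hrε : 2 * r ^ 2 / #V ≤ ε := by
    refine div_le_of_le_mul₀ (Nat.cast_nonneg _) hε.le ?_
    linarith [(div_le_iff₀ hε).1 (Nat.ceil_le.1 (le_of_max_le_right ht))]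
  have := pow_sub_le_density_of_ratio_dense (fun e he => (hE e (hCE he)).1) hC hCne hδ1 hrδ
    hν hν' hratio
  linarith
end

section
/- (Existence of switchers.) For every integer ℓ ≥ 2 and every μ > 0 there exists t_0 such that for all t ≥ t_0 the following holds. Set δ = ℓ/(ℓ + 2·sqrt(ℓ−1)). Let L be an ℓ-graph on t vertices with edge density at least δ + μ, and let C be a vertex-spanning subgraph of L with at least one edge whose edge density ν and whose shadow ∂(C)'s edge density ν' satisfy ν ≥ (δ + μ)·ν'. Then C contains a switcher. -/
open Finset

variable {A : Type*} [DecidableEq A]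

/-!
Write `d S` for the number of edges of `C` containing `S`, and suppose `C` has no switcher.
For an edge `e`, let `a ∈ e` maximise `d (e - a)`. Since `(e, a)` is not a switcher, some `b ∈ e`
is such that `e - a` and `e - b` have disjoint sets of extensions by a vertex outside `e`,
so `d (e - a) + d (e - b) ≤ t - ℓ + 2`. By the maximality of `a` and Cauchy–Schwarz,
`∑_{a ∈ e} 1 / d (e - a) ≥ (1 + √(ℓ-1))² / (t - ℓ + 2)`. Summing over the edges, each `S ∈ ∂C`
contributes `d S · (1 / d S) = 1`, so `|C| (ℓ + 2√(ℓ-1)) ≤ (t - ℓ + 2) |∂C|`. Together with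
`ν ≥ (δ + μ) ν'` and `ℓ · (t choose ℓ) = (t - ℓ + 1) · (t choose ℓ-1)` this forces
`μ (t - ℓ + 1) ≤ δ ≤ 1`.
-/

def codegree (C : Finset (Finset A)) (S : Finset A) : ℕ :=
  #{e ∈ C | S ⊆ e}

section Codegree

variable {C : Finset (Finset A)} {k n : ℕ} {V e S : Finset A}

theorem mem_shadow_iff_exists_superset : S ∈ shadow k C ↔ ∃ e ∈ C, S ⊆ e ∧ #S = k := by
  simp only [_root_.shadow, mem_biUnion, mem_powersetCard]

theorem shadow_nonempty_of_uniform (hC : ∀ e ∈ C, #e = k + 1) (hne : C.Nonempty) :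
    (shadow k C).Nonempty := by
  obtain ⟨e, he⟩ := hne
  obtain ⟨S, hSe, hSk⟩ := exists_subset_card_eq (n := k) (by rw [hC e he]; omega)
  exact ⟨S, mem_shadow_iff_exists_superset.2 ⟨e, he, hSe, hSk⟩⟩

theorem codegree_pos_of_subset (he : e ∈ C) (hS : S ⊆ e) : 0 < codegree C S :=
  card_pos.2 ⟨e, mem_filter.2 ⟨he, hS⟩⟩

theorem sum_sum_erase_eq_sum_shadow {M : Type*} [AddCommMonoid M] (hC : ∀ e ∈ C, #e = k + 1)
    (f : Finset A → M) :
    ∑ e ∈ C, ∑ a ∈ e, f (e.erase a) = ∑ S ∈ shadow k C, codegree C S • f S := by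
  have hfaces : ∀ e ∈ C, ∀ S, S ∈ e.image e.erase ↔ S ⊆ e ∧ #S = k := fun e he S => by
    rw [mem_image, ← covBy_iff_exists_erase, covBy_iff_exists_insert, exists_eq_insert_iff,
      hC e he, Nat.add_right_cancel_iff]
  calc ∑ e ∈ C, ∑ a ∈ e, f (e.erase a) = ∑ e ∈ C, ∑ S ∈ e.image e.erase, f S :=
        sum_congr rfl fun e _ => (sum_image (erase_injOn e)).symm
    _ = ∑ S ∈ shadow k C, ∑ e ∈ C with S ⊆ e, f S := sum_comm' fun e S => by
        rw [mem_filter, mem_shadow_iff_exists_superset]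
        constructor
        · rintro ⟨he, hS⟩
          obtain ⟨hSe, hSk⟩ := (hfaces e he S).1 hS
          exact ⟨⟨he, hSe⟩, e, he, hSe, hSk⟩
        · rintro ⟨⟨he, hSe⟩, -, -, -, hSk⟩
          exact ⟨he, (hfaces e he S).2 ⟨hSe, hSk⟩⟩
    _ = ∑ S ∈ shadow k C, codegree C S • f S := by simp only [sum_const, codegree]

theorem sum_sum_inv_codegree_erase (hC : ∀ e ∈ C, #e = k + 1) :
    ∑ e ∈ C, ∑ a ∈ e, ((codegree C (e.erase a) : ℝ))⁻¹ = #(shadow k C) := by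
  rw [sum_sum_erase_eq_sum_shadow hC fun S => ((codegree C S : ℝ))⁻¹, card_eq_sum_ones,
    Nat.cast_sum]
  refine sum_congr rfl fun S hS => ?_
  obtain ⟨e, he, hSe, -⟩ := mem_shadow_iff_exists_superset.1 hS
  have hpos : (0 : ℝ) < codegree C S := by exact_mod_cast codegree_pos_of_subset he hSe
  rw [nsmul_eq_mul, mul_inv_cancel₀ hpos.ne', Nat.cast_one]

/-- Every edge through `e - x` other than `e` itself is `e - x + c` for a vertex `c ∉ e`. -/
theorem codegree_erase_le (hCV : ∀ f ∈ C, f ⊆ V) (hC : ∀ f ∈ C, #f = n) (he : e ∈ C)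
    {x : A} (hx : x ∈ e) :
    codegree C (e.erase x) ≤ #{c ∈ V \ e | insert c (e.erase x) ∈ C} + 1 := by
  have hsub : {f ∈ C | e.erase x ⊆ f} ⊆
      insert e ({c ∈ V \ e | insert c (e.erase x) ∈ C}.image (insert · (e.erase x))) := by
    intro f hf
    obtain ⟨hfC, hxf⟩ := mem_filter.1 hf
    obtain ⟨c, hc, rfl⟩ := exists_eq_insert_iff.2
      ⟨hxf, by rw [card_erase_add_one hx, hC _ hfC, hC e he]⟩
    by_cases hce : c ∈ e
    · obtain rfl : c = x := by_contra fun hcx => hc (mem_erase.2 ⟨hcx, hce⟩)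
      rw [insert_erase hx]
      exact mem_insert_self _ _
    · exact mem_insert_of_mem <| mem_image_of_mem _ <|
        mem_filter.2 ⟨mem_sdiff.2 ⟨hCV _ hfC (mem_insert_self _ _), hce⟩, hfC⟩
  calc codegree C (e.erase x) ≤ #(insert e _) := card_le_card hsub
    _ ≤ _ + 1 := card_insert_le _ _
    _ ≤ _ := by gcongr; exact card_image_le

theorem codegree_erase_add_codegree_erase_le (hCV : ∀ f ∈ C, f ⊆ V) (hC : ∀ f ∈ C, #f = n)
    (he : e ∈ C) {a b : A} (ha : a ∈ e) (hb : b ∈ e)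
    (hab : ∀ c, c ∉ e → insert c (e.erase a) ∈ C → insert c (e.erase b) ∉ C) :
    codegree C (e.erase a) + codegree C (e.erase b) + #e ≤ #V + 2 := by
  have hdisj : Disjoint {c ∈ V \ e | insert c (e.erase a) ∈ C}
      {c ∈ V \ e | insert c (e.erase b) ∈ C} :=
    disjoint_filter.2 fun c hc => hab c (mem_sdiff.1 hc).2
  have hunion := card_le_card <| union_subset
    (filter_subset (insert · (e.erase a) ∈ C) (V \ e))
    (filter_subset (insert · (e.erase b) ∈ C) (V \ e))
  rw [card_union_of_disjoint hdisj, card_sdiff_of_subset (hCV e he)] at hunion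
  have := codegree_erase_le hCV hC he ha
  have := codegree_erase_le hCV hC he hb
  have := card_le_card (hCV e he)
  omega

end Codegree

theorem add_sq_div_add_le {x y u v : ℝ} (hu : 0 < u) (hv : 0 < v) :
    (x + y) ^ 2 / (u + v) ≤ x ^ 2 / u + y ^ 2 / v := by
  simpa [Fin.sum_univ_two] using
    sq_sum_div_le_sum_sq_div univ ![x, y] (g := ![u, v]) (by simp [Fin.forall_fin_two, hu, hv])

theorem sqrt_add_one_sq_div_le_sum_inv {ι : Type*} [DecidableEq ι] {s : Finset ι}
    {d : ι → ℝ} {T : ℝ} {a b : ι} (hd : ∀ i ∈ s, 0 < d i) (ha : a ∈ s) (hb : b ∈ s)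
    (hmax : ∀ i ∈ s, d i ≤ d a) (hT : d a + d b ≤ T) :
    (√(#s - 1) + 1) ^ 2 / T ≤ ∑ i ∈ s, (d i)⁻¹ := by
  have hda := hd a ha
  have hdb := hd b hb
  have hs : (1 : ℝ) ≤ #s := by exact_mod_cast card_pos.2 ⟨a, ha⟩
  calc (√(#s - 1) + 1) ^ 2 / T = (√(#s - 1) + 1) ^ 2 / (d a + (T - d a)) := by
        rw [add_sub_cancel]
    _ ≤ √(#s - 1) ^ 2 / d a + 1 ^ 2 / (T - d a) := add_sq_div_add_le hda (by linarith)
    _ = #(s.erase b) • (d a)⁻¹ + (T - d a)⁻¹ := by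
        rw [Real.sq_sqrt (by linarith), nsmul_eq_mul, cast_card_erase_of_mem hb]
        ring
    _ ≤ ∑ i ∈ s.erase b, (d i)⁻¹ + (d b)⁻¹ := by
        gcongr
        · exact card_nsmul_le_sum _ _ _ fun i hi => inv_anti₀ (hd i (mem_of_mem_erase hi))
            (hmax i (mem_of_mem_erase hi))
        · linarith
    _ = ∑ i ∈ s, (d i)⁻¹ := sum_erase_add _ _ hb

section NoSwitcher

variable {C : Finset (Finset A)} {k : ℕ} {V : Finset A}

theorem sqrt_add_one_sq_div_le_sum_inv_codegree (hsw : ¬HasSwitcher C)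
    (hC : ∀ e ∈ C, e ⊆ V ∧ #e = k + 1) {e : Finset A} (he : e ∈ C) :
    (√k + 1) ^ 2 / (#V - k + 1) ≤ ∑ a ∈ e, ((codegree C (e.erase a) : ℝ))⁻¹ := by
  simp only [HasSwitcher, not_exists, not_and, not_forall] at hsw
  obtain ⟨-, he_card⟩ := hC e he
  obtain ⟨a, ha, hmax⟩ := exists_max_image e (fun a => codegree C (e.erase a))
    (card_pos.1 (by omega))
  obtain ⟨b, hb, hab⟩ := hsw e he a ha
  have hsum := codegree_erase_add_codegree_erase_le (fun f hf => (hC f hf).1)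
    (fun f hf => (hC f hf).2) he ha hb hab
  rw [he_card] at hsum
  have hk : (k : ℝ) = #e - 1 := by rw [he_card]; push_cast; ring
  rw [hk]
  refine sqrt_add_one_sq_div_le_sum_inv (fun i hi => ?_) ha hb (fun i hi => ?_) ?_
  · exact_mod_cast codegree_pos_of_subset he (erase_subset i e)
  · exact_mod_cast hmax i hi
  · have : ((codegree C (e.erase a) + codegree C (e.erase b) + (k + 1) : ℕ) : ℝ)
        ≤ ((#V + 2 : ℕ) : ℝ) := by exact_mod_cast hsum
    push_cast at this
    linarith

theorem card_mul_sqrt_add_one_sq_div_le_card_shadow (hsw : ¬HasSwitcher C)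
    (hC : ∀ e ∈ C, e ⊆ V ∧ #e = k + 1) :
    #C * ((√k + 1) ^ 2 / (#V - k + 1)) ≤ #(shadow k C) :=
  calc #C * ((√k + 1) ^ 2 / (#V - k + 1)) = ∑ e ∈ C, (√k + 1) ^ 2 / (#V - k + 1) := by
        rw [sum_const, nsmul_eq_mul]
    _ ≤ ∑ e ∈ C, ∑ a ∈ e, ((codegree C (e.erase a) : ℝ))⁻¹ :=
        sum_le_sum fun e he => sqrt_add_one_sq_div_le_sum_inv_codegree hsw hC he
    _ = #(shadow k C) := sum_sum_inv_codegree_erase fun e he => (hC e he).2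

theorem mul_card_sub_le_one_of_le_density (hsw : ¬HasSwitcher C)
    (hC : ∀ e ∈ C, e ⊆ V ∧ #e = k + 1) (hne : C.Nonempty) {μ : ℝ}
    (hratio : ((k + 1) / (k + 1 + 2 * √k) + μ) * #(shadow k C) * (#V).choose (k + 1)
      ≤ #C * (#V).choose k) :
    μ * (#V - k) ≤ 1 := by
  obtain ⟨e, he⟩ := hne
  have hkV : k + 1 ≤ #V := (hC e he).2 ▸ card_le_card (hC e he).1
  have hT : (0 : ℝ) < #V - k + 1 := by
    have : (k : ℝ) + 1 ≤ #V := by exact_mod_cast hkV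
    linarith
  have hshadow : (0 : ℝ) < #(shadow k C) := by
    exact_mod_cast card_pos.2 (shadow_nonempty_of_uniform (fun f hf => (hC f hf).2) ⟨e, he⟩)
  have hQ : (0 : ℝ) < (#V).choose k := by exact_mod_cast Nat.choose_pos (by omega)
  have hchoose : ((#V).choose (k + 1) : ℝ) * (k + 1) = (#V).choose k * (#V - k) := by
    rw [← Nat.cast_sub (by omega)]
    exact_mod_cast Nat.choose_succ_right_eq (#V) k
  set δ := ((k : ℝ) + 1) / (k + 1 + 2 * √k)
  have hden : 0 < (k : ℝ) + 1 + 2 * √k := by positivity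
  have hδmul : δ * (k + 1 + 2 * √k) = k + 1 := div_mul_cancel₀ _ hden.ne'
  have hδ : δ ≤ 1 := div_le_one_of_le₀ (by linarith [Real.sqrt_nonneg k]) hden.le
  have hedges : (#C : ℝ) * (k + 1) ≤ δ * (#V - k + 1) * #(shadow k C) := by
    have hcount := card_mul_sqrt_add_one_sq_div_le_card_shadow hsw hC
    rw [add_sq, Real.sq_sqrt k.cast_nonneg, one_pow, mul_one, add_right_comm] at hcount
    calc (#C : ℝ) * (k + 1)
        = δ * (#V - k + 1) * (#C * ((k + 1 + 2 * √k) / (#V - k + 1))) := by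
          field_simp
          rw [mul_assoc, hδmul]
      _ ≤ δ * (#V - k + 1) * #(shadow k C) := by gcongr
  have hdensities : (δ + μ) * (#V - k) * (#(shadow k C) * (#V).choose k)
      ≤ δ * (#V - k + 1) * (#(shadow k C) * (#V).choose k) :=
    calc (δ + μ) * (#V - k) * (#(shadow k C) * (#V).choose k)
        = (δ + μ) * #(shadow k C) * (#V).choose (k + 1) * (k + 1) := by
          linear_combination (-(δ + μ) * #(shadow k C)) * hchoose
      _ ≤ #C * (#V).choose k * (k + 1) := by gcongr
      _ = #C * (k + 1) * (#V).choose k := by ring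
      _ ≤ δ * (#V - k + 1) * #(shadow k C) * (#V).choose k := by gcongr
      _ = δ * (#V - k + 1) * (#(shadow k C) * (#V).choose k) := by ring
  nlinarith [le_of_mul_le_mul_right hdensities (by positivity)]

end NoSwitcher

/-- existence of switchers. -/
theorem switcher_existence (l : ℕ) (hl : 2 ≤ l) (μ : ℝ) (hμ : 0 < μ) :
    ∃ t₀ : ℕ, ∀ t : ℕ, t₀ ≤ t →
      ∀ (B : Type) [DecidableEq B], ∀ (V : Finset B) (E C : Finset (Finset B)),
        V.card = t → (∀ e ∈ E, e ⊆ V ∧ e.card = l) → C ⊆ E → C.Nonempty →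
        ((l : ℝ) / ((l : ℝ) + 2 * Real.sqrt ((l : ℝ) - 1)) + μ) * ((t.choose l : ℕ) : ℝ)
          ≤ (E.card : ℝ) →
        ((l : ℝ) / ((l : ℝ) + 2 * Real.sqrt ((l : ℝ) - 1)) + μ)
            * (((shadow (l - 1) C).card : ℕ) : ℝ) * ((t.choose l : ℕ) : ℝ)
          ≤ (C.card : ℝ) * ((t.choose (l - 1) : ℕ) : ℝ) →
        HasSwitcher C := by
  obtain ⟨m, hm⟩ := exists_nat_gt μ⁻¹
  refine ⟨l + m, fun t ht B _ V E C hV hE hCE hCne _ hratio => ?_⟩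
  by_contra hsw
  obtain ⟨k, rfl⟩ : ∃ k, l = k + 1 := ⟨l - 1, by omega⟩
  subst hV
  simp only [Nat.add_sub_cancel, Nat.cast_add, Nat.cast_one, add_sub_cancel_right] at hratio
  have hμV := mul_card_sub_le_one_of_le_density hsw (fun e he => hE e (hCE he)) hCne hratio
  have hmV : (m : ℝ) < #V - k := by
    have : ((k + 1 + m : ℕ) : ℝ) ≤ #V := by exact_mod_cast ht
    push_cast at this
    linarith
  have := (inv_lt_iff_one_lt_mul₀' hμ).1 (hm.trans hmV)
  linarith
end
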